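/- arXiv:2005.07257 — 9 statements merged into one kernel-verified Lean document; each statement's English description precedes it below -/
import Mathlib

section
/- Suppose λ ∈ ℝ^N is entrywise nonnegative with λ ≠ 0, δ and α are entrywise positive, s ≥ 0, and B is an irreducible nonnegative matrix. Then there exists exactly one vector p ∈ [0,1]^N satisfying g(s,p) = 0, and this vector satisfies 0 < p_i < 1 for every index i. -/
/-!
Put `c = α ∘ s + δ > 0`. For `p ≥ 0` the equation `g(s,p) = 0` says exactly that `p` is a fixed
point of `T(p)_i = (λ_i + (Bp)_i) / (λ_i + (Bp)_i + c_i)`. The map `T` is monotone and sends the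
cube `[0,1]^N` into itself, so Knaster–Tarski gives a fixed point there. Every fixed point lies
strictly inside the cube: `T < 1` because `c > 0`, and positivity starts at an index with
`λ_j > 0` and spreads backwards along the positive entries of `B`, which reach every index by
irreducibility. Finally `T` is strictly subhomogeneous, `θ T(p) < T(θ p)` for `0 < θ < 1`; if
`q, r` are positive fixed points and `θ = min_i q_i / r_i < 1` were attained at `i`, then
`q_i = θ T(r)_i < T(θ r)_i ≤ T(q)_i = q_i`. Hence `r ≤ q`, and by symmetry `q = r`.
-/

noncomputable section

open Matrix

/-- Irreducibility of a nonnegative matrix: for all indices `i, j` there is `k ≥ 1`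
with `(B^k) i j > 0`. -/
def MatIrred {N : ℕ} (B : Matrix (Fin N) (Fin N) ℝ) : Prop :=
  ∀ i j, ∃ k : ℕ, 1 ≤ k ∧ 0 < (B ^ k) i j

/-- The map `g(s,p)` with `g_i(s,p) = (1 - p_i)(λ_i + (Bp)_i) - (α_i s_i + δ_i) p_i`. -/
def gfun {N : ℕ} (B : Matrix (Fin N) (Fin N) ℝ) (lam δ α s p : Fin N → ℝ) : Fin N → ℝ :=
  fun i => (1 - p i) * (lam i + B.mulVec p i) - (α i * s i + δ i) * p i

open Set Function

theorem MonotoneOn.exists_isFixedPt_of_mapsTo_Icc {α : Type*} [ConditionallyCompleteLattice α]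
    {a b : α} (hab : a ≤ b) {f : α → α} (hf : MonotoneOn f (Icc a b))
    (hmaps : MapsTo f (Icc a b) (Icc a b)) : ∃ x ∈ Icc a b, IsFixedPt f x := by
  have : Fact (a ≤ b) := ⟨hab⟩
  let F : Icc a b →o Icc a b := ⟨hmaps.restrict f _ _, fun x y hxy => hf x.2 y.2 hxy⟩
  exact ⟨F.lfp, F.lfp.2, congrArg Subtype.val F.map_lfp⟩

theorem Matrix.IsIrreducible.forall_of_exists {n R : Type*} [Ring R] [LinearOrder R]
    {A : Matrix n n R} (hA : A.IsIrreducible) {P : n → Prop}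
    (hP : ∀ i j, 0 < A i j → P j → P i) (hex : ∃ j, P j) (i : n) : P i := by
  obtain ⟨j, hj⟩ := hex
  let := toQuiver A
  obtain ⟨path, -⟩ := hA.connected i j
  induction path with
  | nil => exact hj
  | cons _ e ih => exact ih (hP _ _ e.down hj)

theorem le_of_isFixedPt_of_strictSubhomogeneous {ι : Type*} [Finite ι]
    {T : (ι → ℝ) → ι → ℝ} (hT : MonotoneOn T (Ici 0))
    (hsub : ∀ θ p i, 0 < θ → θ < 1 → 0 ≤ p → 0 < T p i → θ * T p i < T (θ • p) i)
    {q r : ι → ℝ} (hq : IsFixedPt T q) (hr : IsFixedPt T r)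
    (hq0 : ∀ i, 0 < q i) (hr0 : ∀ i, 0 < r i) : r ≤ q := by
  cases isEmpty_or_nonempty ι
  · exact fun i => isEmptyElim i
  obtain ⟨i₀, hi₀⟩ := Finite.exists_min fun i => q i / r i
  set θ := q i₀ / r i₀
  have hθr : θ • r ≤ q := fun i => by
    simpa [le_div_iff₀ (hr0 i)] using hi₀ i
  have hθ : 1 ≤ θ := by
    by_contra! hθ1
    have hθ0 : 0 < θ := div_pos (hq0 i₀) (hr0 i₀)
    have hr0' : 0 ≤ r := fun i => (hr0 i).le
    have := calc q i₀ = θ * T r i₀ := by rw [hr.eq, div_mul_cancel₀ _ (hr0 i₀).ne']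
      _ < T (θ • r) i₀ := hsub θ r i₀ hθ0 hθ1 hr0' (by rw [hr.eq]; exact hr0 i₀)
      _ ≤ T q i₀ := hT (smul_nonneg hθ0.le hr0') (fun i => (hq0 i).le) hθr i₀
      _ = q i₀ := by rw [hq.eq]
    exact lt_irrefl _ this
  exact fun i => le_trans (le_mul_of_one_le_left (hr0 i).le hθ) (hθr i)

theorem eq_of_isFixedPt_of_strictSubhomogeneous {ι : Type*} [Finite ι]
    {T : (ι → ℝ) → ι → ℝ} (hT : MonotoneOn T (Ici 0))
    (hsub : ∀ θ p i, 0 < θ → θ < 1 → 0 ≤ p → 0 < T p i → θ * T p i < T (θ • p) i)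
    {q r : ι → ℝ} (hq : IsFixedPt T q) (hr : IsFixedPt T r)
    (hq0 : ∀ i, 0 < q i) (hr0 : ∀ i, 0 < r i) : q = r :=
  le_antisymm (le_of_isFixedPt_of_strictSubhomogeneous hT hsub hr hq hr0 hq0)
    (le_of_isFixedPt_of_strictSubhomogeneous hT hsub hq hr hq0 hr0)

section Saturation

/-- Solving `(1 - p)(a + x) - c p = 0` for `p`. -/
def saturation (a c x : ℝ) : ℝ := (a + x) / (a + x + c)

variable {a c x : ℝ}

lemma saturation_nonneg (ha : 0 ≤ a) (hc : 0 < c) (hx : 0 ≤ x) : 0 ≤ saturation a c x :=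
  div_nonneg (by linarith) (by linarith)

lemma saturation_lt_one (ha : 0 ≤ a) (hc : 0 < c) (hx : 0 ≤ x) : saturation a c x < 1 :=
  (div_lt_one (by linarith)).2 (by linarith)

lemma saturation_pos_iff (ha : 0 ≤ a) (hc : 0 < c) (hx : 0 ≤ x) :
    0 < saturation a c x ↔ 0 < a + x :=
  div_pos_iff_of_pos_right (by linarith)

lemma saturation_mono (ha : 0 ≤ a) (hc : 0 < c) {y : ℝ} (hx : 0 ≤ x) (hxy : x ≤ y) :
    saturation a c x ≤ saturation a c y := by
  rw [saturation, saturation, div_le_div_iff₀ (by linarith) (by linarith)]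
  nlinarith

lemma mul_saturation_lt (ha : 0 ≤ a) (hc : 0 < c) (hx : 0 ≤ x) (hax : 0 < a + x) {θ : ℝ}
    (hθ0 : 0 < θ) (hθ1 : θ < 1) : θ * saturation a c x < saturation a c (θ * x) := by
  rw [saturation, saturation, mul_div_assoc', div_lt_div_iff₀ (by linarith) (by nlinarith)]
  have hθ : 0 < 1 - θ := sub_pos.2 hθ1
  have key : (a + θ * x) * (a + x + c) - θ * (a + x) * (a + θ * x + c)
      = (1 - θ) * θ * (a + x) ^ 2 + (1 - θ) * a * ((1 - θ) * a + c) + (1 - θ) ^ 2 * a * x := by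
    ring
  have h₁ : 0 < (1 - θ) * θ * (a + x) ^ 2 := by positivity
  have h₂ : 0 ≤ (1 - θ) * a * ((1 - θ) * a + c) := by positivity
  have h₃ : 0 ≤ (1 - θ) ^ 2 * a * x := by positivity
  linarith

lemma sub_mul_sub_eq_zero_iff_eq_saturation (ha : 0 ≤ a) (hc : 0 < c) (hx : 0 ≤ x) {p : ℝ} :
    (1 - p) * (a + x) - c * p = 0 ↔ p = saturation a c x := by
  rw [saturation, eq_div_iff (by linarith)]
  constructor <;> intro h <;> linarith

end Saturation

section SatMap

variable {ι : Type*} [Fintype ι] {B : Matrix ι ι ℝ}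

lemma mulVec_nonneg (hB : ∀ i j, 0 ≤ B i j) {p : ι → ℝ} (hp : 0 ≤ p) : 0 ≤ B *ᵥ p :=
  fun i => Finset.sum_nonneg fun j _ => mul_nonneg (hB i j) (hp j)

lemma mulVec_monotone (hB : ∀ i j, 0 ≤ B i j) : Monotone (B *ᵥ ·) :=
  fun _ _ hpq i => Finset.sum_le_sum fun j _ => mul_le_mul_of_nonneg_left (hpq j) (hB i j)

lemma mulVec_apply_pos (hB : ∀ i j, 0 ≤ B i j) {p : ι → ℝ} (hp : 0 ≤ p) {i l : ι}
    (hil : 0 < B i l) (hl : 0 < p l) : 0 < (B *ᵥ p) i :=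
  Finset.sum_pos' (fun j _ => mul_nonneg (hB i j) (hp j)) ⟨l, Finset.mem_univ l, mul_pos hil hl⟩

variable (B) (lam c : ι → ℝ)

def satMap (p : ι → ℝ) : ι → ℝ := fun i => saturation (lam i) (c i) ((B *ᵥ p) i)

variable {B lam c} (hB : ∀ i j, 0 ≤ B i j) (hlam : 0 ≤ lam) (hc : ∀ i, 0 < c i)
include hB hlam hc

lemma satMap_apply_lt_one {p : ι → ℝ} (hp : 0 ≤ p) (i : ι) : satMap B lam c p i < 1 :=
  saturation_lt_one (hlam i) (hc i) (mulVec_nonneg hB hp i)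

lemma satMap_mem_Icc {p : ι → ℝ} (hp : 0 ≤ p) : satMap B lam c p ∈ Icc 0 1 :=
  ⟨fun i => saturation_nonneg (hlam i) (hc i) (mulVec_nonneg hB hp i),
    fun i => (satMap_apply_lt_one hB hlam hc hp i).le⟩

lemma satMap_monotoneOn : MonotoneOn (satMap B lam c) (Ici 0) := fun _ hp _ _ hpq i =>
  saturation_mono (hlam i) (hc i) (mulVec_nonneg hB hp i) (mulVec_monotone hB hpq i)

lemma mul_satMap_lt {θ : ℝ} {p : ι → ℝ} {i : ι} (hθ0 : 0 < θ) (hθ1 : θ < 1) (hp : 0 ≤ p)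
    (hpos : 0 < satMap B lam c p i) : θ * satMap B lam c p i < satMap B lam c (θ • p) i := by
  have hx := mulVec_nonneg hB hp i
  rw [satMap, satMap, mulVec_smul, Pi.smul_apply, smul_eq_mul]
  exact mul_saturation_lt (hlam i) (hc i) hx ((saturation_pos_iff (hlam i) (hc i) hx).1 hpos)
    hθ0 hθ1

lemma pos_of_isFixedPt_satMap (hirr : B.IsIrreducible) (hlam0 : lam ≠ 0) {p : ι → ℝ}
    (hp0 : 0 ≤ p) (hp : IsFixedPt (satMap B lam c) p) (i : ι) : 0 < p i := by
  have hpos : ∀ i, 0 < lam i + (B *ᵥ p) i → 0 < p i := fun i h => by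
    rw [← hp.eq]
    exact (saturation_pos_iff (hlam i) (hc i) (mulVec_nonneg hB hp0 i)).2 h
  obtain ⟨j, hj⟩ := (Pi.lt_def.1 (lt_of_le_of_ne hlam (Ne.symm hlam0))).2
  refine hirr.forall_of_exists (P := fun i => 0 < p i) (fun i l hil hl => ?_) ⟨j, ?_⟩ i
  · exact hpos i (add_pos_of_nonneg_of_pos (hlam i) (mulVec_apply_pos hB hp0 hil hl))
  · exact hpos j (add_pos_of_pos_of_nonneg hj (mulVec_nonneg hB hp0 j))

end SatMap

lemma gfun_eq_zero_iff {N : ℕ} {B : Matrix (Fin N) (Fin N) ℝ} {lam δ α s p : Fin N → ℝ}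
    (hB : ∀ i j, 0 ≤ B i j) (hlam : 0 ≤ lam) (hc : ∀ i, 0 < (α * s + δ) i) (hp : 0 ≤ p) :
    gfun B lam δ α s p = 0 ↔ IsFixedPt (satMap B lam (α * s + δ)) p := by
  simp only [IsFixedPt, funext_iff, Pi.zero_apply, gfun, satMap, Pi.add_apply, Pi.mul_apply]
  exact forall_congr' fun i =>
    (sub_mul_sub_eq_zero_iff_eq_saturation (hlam i) (hc i) (mulVec_nonneg hB hp i)).trans eq_comm

theorem statement0_general {N : ℕ}
    (B : Matrix (Fin N) (Fin N) ℝ) (hBnn : ∀ i j, 0 ≤ B i j) (hBirr : MatIrred B)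
    (lam δ α s : Fin N → ℝ)
    (hlam : ∀ i, 0 ≤ lam i) (hlam0 : lam ≠ 0)
    (hδ : ∀ i, 0 < δ i) (hα : ∀ i, 0 < α i) (hs : ∀ i, 0 ≤ s i) :
    ∃ p : Fin N → ℝ,
      ((∀ i, 0 ≤ p i ∧ p i ≤ 1) ∧ gfun B lam δ α s p = 0) ∧
      (∀ i, 0 < p i ∧ p i < 1) ∧
      (∀ q : Fin N → ℝ, (∀ i, 0 ≤ q i ∧ q i ≤ 1) → gfun B lam δ α s q = 0 → q = p) := by
  set T := satMap B lam (α * s + δ)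
  have hc : ∀ i, 0 < (α * s + δ) i := fun i =>
    add_pos_of_nonneg_of_pos (mul_nonneg (hα i).le (hs i)) (hδ i)
  have hzero : ∀ q, 0 ≤ q → (gfun B lam δ α s q = 0 ↔ IsFixedPt T q) :=
    fun q => gfun_eq_zero_iff hBnn hlam hc
  have hirr : B.IsIrreducible := (isIrreducible_iff_exists_pow_pos hBnn).2 hBirr
  have hinside : ∀ q, 0 ≤ q → IsFixedPt T q → ∀ i, 0 < q i ∧ q i < 1 :=
    fun q hq0 hq i => ⟨pos_of_isFixedPt_satMap hBnn hlam hc hirr hlam0 hq0 hq i,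
      hq.eq ▸ satMap_apply_lt_one hBnn hlam hc hq0 i⟩
  have hT : MonotoneOn T (Ici 0) := satMap_monotoneOn hBnn hlam hc
  obtain ⟨p, ⟨hp0, hp1⟩, hp⟩ := (hT.mono Icc_subset_Ici_self).exists_isFixedPt_of_mapsTo_Icc
    zero_le_one fun q hq => satMap_mem_Icc hBnn hlam hc hq.1
  refine ⟨p, ⟨fun i => ⟨hp0 i, hp1 i⟩, (hzero p hp0).2 hp⟩, hinside p hp0 hp, fun q hq hqg => ?_⟩
  have hq0 : 0 ≤ q := fun i => (hq i).1
  have hqfix := (hzero q hq0).1 hqg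
  exact eq_of_isFixedPt_of_strictSubhomogeneous hT (fun _ _ _ => mul_satMap_lt hBnn hlam hc)
    hqfix hp (fun i => (hinside q hq0 hqfix i).1) fun i => (hinside p hp0 hp i).1

theorem statement0 {N : ℕ} (hN : 2 ≤ N)
    (B : Matrix (Fin N) (Fin N) ℝ) (hBnn : ∀ i j, 0 ≤ B i j) (hBirr : MatIrred B)
    (lam δ α s : Fin N → ℝ)
    (hlam : ∀ i, 0 ≤ lam i) (hlam0 : lam ≠ 0)
    (hδ : ∀ i, 0 < δ i) (hα : ∀ i, 0 < α i) (hs : ∀ i, 0 ≤ s i) :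
    ∃ p : Fin N → ℝ,
      ((∀ i, 0 ≤ p i ∧ p i ≤ 1) ∧ gfun B lam δ α s p = 0) ∧
      (∀ i, 0 < p i ∧ p i < 1) ∧
      (∀ q : Fin N → ℝ, (∀ i, 0 ≤ q i ∧ q i ≤ 1) → gfun B lam δ α s q = 0 → q = p) :=
  statement0_general B hBnn hBirr lam δ α s hlam hlam0 hδ hα hs
end
end

section
/- Let p* ∈ (0,1)^N satisfy g(s,p*) = 0 and set u := α∘s + δ and Ξ := diag((1 − p*)/u). Then the spectral radius of ΞB is at most 1; consequently the spectral radius of diag(1 − p*)·Ξ·B equals the spectral radius of diag((1 − p*)∘(1 − p*)/u)·B and is at most 1 − min_i p*_i, which is strictly less than 1. -/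
noncomputable section

open Matrix

/-- Spectral radius of a real matrix: the maximum modulus of its complex eigenvalues. -/
def specRad {N : ℕ} (A : Matrix (Fin N) (Fin N) ℝ) : ℝ :=
  sSup ((fun μ : ℂ => ‖μ‖) '' spectrum ℂ (A.map Complex.ofReal))

/-!
The equilibrium equation `g(s,p*) = 0` reads `(1 - p*)(λ + B p*) = u ∘ p*`; as `λ ≥ 0` this
makes the positive vector `p*` subinvariant, `Ξ B p* ≤ p*`, and then
`diag(1 - p*) Ξ B p* ≤ (1 - min p*) p*`. Both bounds on the spectral radius follow from the
Collatz–Wielandt estimate: if `A ≥ 0` and `A x ≤ c x` with `x > 0`, an eigenvector `v` of `A`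
satisfies `|v| ≤ r x` with equality at some index, whence `|μ| ≤ c` for its eigenvalue `μ`.
-/

namespace Matrix

variable {ι : Type*} [Fintype ι]

lemma mulVec_le_mulVec_of_nonneg {A : Matrix ι ι ℝ} (hA : ∀ i j, 0 ≤ A i j) {y z : ι → ℝ}
    (hyz : ∀ j, y j ≤ z j) (i : ι) : (A *ᵥ y) i ≤ (A *ᵥ z) i :=
  Finset.sum_le_sum fun j _ => mul_le_mul_of_nonneg_left (hyz j) (hA i j)

lemma norm_map_ofReal_mulVec_le {A : Matrix ι ι ℝ} (hA : ∀ i j, 0 ≤ A i j) (v : ι → ℂ)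
    (i : ι) : ‖(A.map Complex.ofReal *ᵥ v) i‖ ≤ (A *ᵥ fun j => ‖v j‖) i := by
  simp only [mulVec, dotProduct, map_apply]
  refine (norm_sum_le _ _).trans_eq (Finset.sum_congr rfl fun j _ => ?_)
  rw [norm_mul, Complex.norm_real, Real.norm_of_nonneg (hA i j)]

lemma norm_le_of_mulVec_le {A : Matrix ι ι ℝ} (hA : ∀ i j, 0 ≤ A i j) {x : ι → ℝ}
    (hx : ∀ i, 0 < x i) {c : ℝ} (hAx : ∀ i, (A *ᵥ x) i ≤ c * x i) {μ : ℂ} {v : ι → ℂ}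
    (hv : v ≠ 0) (hμ : A.map Complex.ofReal *ᵥ v = μ • v) : ‖μ‖ ≤ c := by
  obtain ⟨j, hj⟩ := Function.ne_iff.mp hv
  have : Nonempty ι := ⟨j⟩
  obtain ⟨i, hi⟩ := Finite.exists_max fun i => ‖v i‖ / x i
  set r := ‖v i‖ / x i
  have hvx : ∀ j, ‖v j‖ ≤ r * x j := fun j => (div_le_iff₀ (hx j)).mp (hi j)
  have hr : 0 ≤ r := div_nonneg (norm_nonneg _) (hx i).le
  have hvi : r * x i = ‖v i‖ := div_mul_cancel₀ _ (hx i).ne'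
  have hvi_pos : 0 < ‖v i‖ :=
    hvi ▸ mul_pos ((div_pos (norm_pos_iff.mpr hj) (hx j)).trans_le (hi j)) (hx i)
  refine le_of_mul_le_mul_right ?_ hvi_pos
  calc ‖μ‖ * ‖v i‖ = ‖(A.map Complex.ofReal *ᵥ v) i‖ := by
        rw [hμ, Pi.smul_apply, smul_eq_mul, norm_mul]
    _ ≤ (A *ᵥ fun j => ‖v j‖) i := norm_map_ofReal_mulVec_le hA v i
    _ ≤ (A *ᵥ (r • x)) i := mulVec_le_mulVec_of_nonneg hA hvx i
    _ = r * (A *ᵥ x) i := by rw [mulVec_smul, Pi.smul_apply, smul_eq_mul]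
    _ ≤ r * (c * x i) := mul_le_mul_of_nonneg_left (hAx i) hr
    _ = c * ‖v i‖ := by rw [← hvi]; ring

lemma diagonal_mul_nonneg [DecidableEq ι] {d : ι → ℝ} (hd : ∀ i, 0 ≤ d i) {A : Matrix ι ι ℝ}
    (hA : ∀ i j, 0 ≤ A i j) (i j : ι) : 0 ≤ (diagonal d * A) i j := by
  rw [diagonal_mul]
  exact mul_nonneg (hd i) (hA i j)

lemma diagonal_mul_mulVec_le [DecidableEq ι] {A : Matrix ι ι ℝ} (hA : ∀ i j, 0 ≤ A i j)
    {x : ι → ℝ} (hx : ∀ i, 0 ≤ x i) (hAx : ∀ i, (A *ᵥ x) i ≤ x i) {d : ι → ℝ} {c : ℝ}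
    (hd : ∀ i, 0 ≤ d i) (hdc : ∀ i, d i ≤ c) (i : ι) :
    ((diagonal d * A) *ᵥ x) i ≤ c * x i := by
  have hAx_nonneg : 0 ≤ (A *ᵥ x) i := by
    simpa using mulVec_le_mulVec_of_nonneg hA (y := 0) hx i
  rw [← mulVec_mulVec, mulVec_diagonal]
  exact mul_le_mul (hdc i) (hAx i) hAx_nonneg ((hd i).trans (hdc i))

end Matrix

lemma specRad_le_of_mulVec_le {N : ℕ} {A : Matrix (Fin N) (Fin N) ℝ} (hA : ∀ i j, 0 ≤ A i j)
    {x : Fin N → ℝ} (hx : ∀ i, 0 < x i) {c : ℝ} (hc : 0 ≤ c)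
    (hAx : ∀ i, (A *ᵥ x) i ≤ c * x i) : specRad A ≤ c := by
  refine Real.sSup_le ?_ hc
  rintro _ ⟨μ, hμ, rfl⟩
  rw [← AlgEquiv.spectrum_eq toLinAlgEquiv'] at hμ
  obtain ⟨v, hv⟩ := (Module.End.HasEigenvalue.of_mem_spectrum hμ).exists_hasEigenvector
  exact norm_le_of_mulVec_le hA hx hAx hv.2 hv.apply_eq_smul

lemma mulVec_le_of_gfun_eq_zero {N : ℕ} {B : Matrix (Fin N) (Fin N) ℝ}
    {lam δ α s p : Fin N → ℝ} (hlam : ∀ i, 0 ≤ lam i) (hp : ∀ i, p i ≤ 1)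
    (hu : ∀ i, 0 < α i * s i + δ i) (hg : gfun B lam δ α s p = 0) (i : Fin N) :
    (((diagonal fun i => (1 - p i) / (α i * s i + δ i)) * B) *ᵥ p) i ≤ p i := by
  have hgi : (1 - p i) * (lam i + (B *ᵥ p) i) = (α i * s i + δ i) * p i :=
    sub_eq_zero.mp (congrFun hg i)
  have hlam_term : 0 ≤ (1 - p i) * lam i := mul_nonneg (sub_nonneg.mpr (hp i)) (hlam i)
  rw [← mulVec_mulVec, mulVec_diagonal, div_mul_eq_mul_div, div_le_iff₀ (hu i)]
  linarith

theorem statement2_general {N : ℕ} (hN : 2 ≤ N)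
    (B : Matrix (Fin N) (Fin N) ℝ) (hBnn : ∀ i j, 0 ≤ B i j)
    (lam δ α s : Fin N → ℝ)
    (hlam : ∀ i, 0 ≤ lam i)
    (hδ : ∀ i, 0 < δ i) (hα : ∀ i, 0 < α i) (hs : ∀ i, 0 ≤ s i)
    (pstar : Fin N → ℝ) (hpstar : ∀ i, 0 < pstar i ∧ pstar i < 1)
    (hpeq : gfun B lam δ α s pstar = 0)
    (u : Fin N → ℝ) (hu : u = fun i => α i * s i + δ i)
    (Ξ : Matrix (Fin N) (Fin N) ℝ)
    (hΞ : Ξ = Matrix.diagonal (fun i => (1 - pstar i) / u i)) :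
    specRad (Ξ * B) ≤ 1 ∧
    specRad (Matrix.diagonal (fun i => 1 - pstar i) * Ξ * B) =
      specRad (Matrix.diagonal (fun i => (1 - pstar i) * (1 - pstar i) / u i) * B) ∧
    specRad (Matrix.diagonal (fun i => 1 - pstar i) * Ξ * B) ≤ 1 - ⨅ i, pstar i ∧
    (1 - ⨅ i, pstar i) < 1 := by
  subst hu
  beta_reduce at hΞ ⊢
  have hu_pos : ∀ i, 0 < α i * s i + δ i := fun i => by
    have := hα i; have := hs i; have := hδ i; positivity
  have hq : ∀ i, 0 ≤ 1 - pstar i := fun i => sub_nonneg.mpr (hpstar i).2.le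
  have hΞB := diagonal_mul_nonneg (fun i => div_nonneg (hq i) (hu_pos i).le) hBnn
  have hsub := mulVec_le_of_gfun_eq_zero hlam (fun i => (hpstar i).2.le) hu_pos hpeq
  rw [← hΞ] at hΞB hsub
  have : Nonempty (Fin N) := ⟨⟨0, by omega⟩⟩
  obtain ⟨i₀, hi₀⟩ := exists_eq_ciInf_of_finite (f := pstar)
  have hmin_le : ∀ i, ⨅ j, pstar j ≤ pstar i := fun i => ciInf_le (Finite.bddBelow_range _) i
  have hc : 0 ≤ 1 - ⨅ i, pstar i := by linarith [(hpstar i₀).2]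
  refine ⟨specRad_le_of_mulVec_le hΞB (fun i => (hpstar i).1) zero_le_one (by simpa using hsub),
    by rw [hΞ, diagonal_mul_diagonal]; simp only [mul_div_assoc], ?_, by linarith [(hpstar i₀).1]⟩
  rw [Matrix.mul_assoc]
  exact specRad_le_of_mulVec_le (diagonal_mul_nonneg hq hΞB) (fun i => (hpstar i).1) hc
    (diagonal_mul_mulVec_le hΞB (fun i => (hpstar i).1.le) hsub hq
      fun i => sub_le_sub_left (hmin_le i) 1)

theorem statement2 {N : ℕ} (hN : 2 ≤ N)
    (B : Matrix (Fin N) (Fin N) ℝ) (hBnn : ∀ i j, 0 ≤ B i j) (hBirr : MatIrred B)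
    (lam δ α s : Fin N → ℝ)
    (hlam : ∀ i, 0 ≤ lam i) (hlam0 : lam ≠ 0)
    (hδ : ∀ i, 0 < δ i) (hα : ∀ i, 0 < α i) (hs : ∀ i, 0 ≤ s i)
    (pstar : Fin N → ℝ) (hpstar : ∀ i, 0 < pstar i ∧ pstar i < 1)
    (hpeq : gfun B lam δ α s pstar = 0)
    (u : Fin N → ℝ) (hu : u = fun i => α i * s i + δ i)
    (Ξ : Matrix (Fin N) (Fin N) ℝ)
    (hΞ : Ξ = Matrix.diagonal (fun i => (1 - pstar i) / u i)) :
    specRad (Ξ * B) ≤ 1 ∧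
    specRad (Matrix.diagonal (fun i => 1 - pstar i) * Ξ * B) =
      specRad (Matrix.diagonal (fun i => (1 - pstar i) * (1 - pstar i) / u i) * B) ∧
    specRad (Matrix.diagonal (fun i => 1 - pstar i) * Ξ * B) ≤ 1 - ⨅ i, pstar i ∧
    (1 - ⨅ i, pstar i) < 1 :=
  statement2_general hN B hBnn lam δ α s hlam hδ hα hs pstar hpstar hpeq u hu Ξ hΞ
end
end

section
/- Let p* ∈ (0,1)^N satisfy g(s,p*) = 0, set u := α∘s + δ and H(p)_i := (λ_i + (Bp)_i)/(λ_i + (Bp)_i + u_i). Then for all p, p′ ∈ ℝ^N with p ≥ p′ ≥ p* (entrywise) one has, entrywise, 0 ≤ H(p) − H(p′) ≤ diag((1 − p*)∘(1 − p*)/u) · B · (p − p′). -/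
/-!
Write `a_i = λ_i + (Bp)_i` and `u_i = α_i s_i + δ_i`, so that `H(p)_i = a_i / (a_i + u_i)`.
The map `x ↦ x / (x + u)` is increasing with difference quotient `u / ((a + u)(a' + u))`,
which for `a, a' ≥ A` is at most `u / (A + u)²`. At `A = λ_i + (Bp*)_i` the equation
`g_i(s, p*) = 0` reads `(1 - p*_i)(A + u_i) = u_i`, turning `u / (A + u)²` into
`(1 - p*_i)² / u_i`; and `a_i, a'_i ≥ A` because `B ≥ 0` and `p ≥ p' ≥ p*`.
-/

noncomputable section

open Matrix

lemma div_add_sub_div_add {a a' u : ℝ} (ha : a + u ≠ 0) (ha' : a' + u ≠ 0) :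
    a / (a + u) - a' / (a' + u) = u * (a - a') / ((a + u) * (a' + u)) := by
  field_simp
  ring

lemma div_add_le_div_add {a a' u : ℝ} (hu : 0 ≤ u) (ha' : 0 < a' + u) (h : a' ≤ a) :
    a' / (a' + u) ≤ a / (a + u) := by
  rw [div_le_div_iff₀ ha' (by linarith)]
  nlinarith

lemma div_add_sub_div_add_le {A a a' u : ℝ} (hu : 0 ≤ u) (hA : 0 < A + u) (hAa' : A ≤ a')
    (h : a' ≤ a) : a / (a + u) - a' / (a' + u) ≤ u / (A + u) ^ 2 * (a - a') := by
  rw [div_add_sub_div_add (by linarith) (by linarith), div_mul_eq_mul_div,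
    div_le_div_iff₀ (by nlinarith) (by positivity)]
  have hden : (A + u) ^ 2 ≤ (a + u) * (a' + u) := by
    rw [sq]
    gcongr <;> linarith
  have hnum : 0 ≤ u * (a - a') := mul_nonneg hu (by linarith)
  nlinarith

lemma div_sq_eq_of_mul_eq {A u P : ℝ} (hu : u ≠ 0) (hfix : P * (A + u) = u) :
    u / (A + u) ^ 2 = P * P / u := by
  have hAu : A + u ≠ 0 := by rintro h; rw [h, mul_zero] at hfix; exact hu hfix.symm
  rw [div_eq_div_iff (pow_ne_zero 2 hAu) hu]
  linear_combination -(u + P * (A + u)) * hfix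

lemma one_sub_mul_add_eq_of_gfun_eq_zero {N : ℕ} {B : Matrix (Fin N) (Fin N) ℝ}
    {lam δ α s p : Fin N → ℝ} {i : Fin N} (h : gfun B lam δ α s p i = 0) :
    (1 - p i) * (lam i + (B *ᵥ p) i + (α i * s i + δ i)) = α i * s i + δ i := by
  unfold gfun at h
  linear_combination h

lemma mulVec_apply_le_mulVec_apply {n : Type*} [Fintype n] {B : Matrix n n ℝ}
    (hB : ∀ i j, 0 ≤ B i j) {q r : n → ℝ} (h : q ≤ r) (i : n) : (B *ᵥ q) i ≤ (B *ᵥ r) i :=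
  dotProduct_le_dotProduct_of_nonneg_left h (hB i)

theorem statement3_general {N : ℕ}
    (B : Matrix (Fin N) (Fin N) ℝ) (hBnn : ∀ i j, 0 ≤ B i j)
    (lam δ α s : Fin N → ℝ)
    (hδ : ∀ i, 0 < δ i) (hα : ∀ i, 0 < α i) (hs : ∀ i, 0 ≤ s i)
    (pstar : Fin N → ℝ) (hpstar : ∀ i, 0 < pstar i ∧ pstar i < 1)
    (hpeq : gfun B lam δ α s pstar = 0)
    (u : Fin N → ℝ) (hu : u = fun i => α i * s i + δ i)
    (H : (Fin N → ℝ) → (Fin N → ℝ))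
    (hH : H = fun p i => (lam i + B.mulVec p i) / (lam i + B.mulVec p i + u i)) :
    ∀ p p' : Fin N → ℝ, (∀ i, pstar i ≤ p' i) → (∀ i, p' i ≤ p i) →
      ∀ i, 0 ≤ H p i - H p' i ∧
        H p i - H p' i ≤
          ((Matrix.diagonal (fun j => (1 - pstar j) * (1 - pstar j) / u j)) * B).mulVec
            (fun j => p j - p' j) i := by
  intro p p' hp' hpp i
  subst hH hu
  have hui : 0 < α i * s i + δ i := add_pos_of_nonneg_of_pos (mul_nonneg (hα i).le (hs i)) (hδ i)
  have hfix := one_sub_mul_add_eq_of_gfun_eq_zero (congrFun hpeq i)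
  have hA : 0 < lam i + (B *ᵥ pstar) i + (α i * s i + δ i) :=
    pos_of_mul_pos_right (hui.trans_eq hfix.symm) (sub_pos.2 (hpstar i).2).le
  have hAa' := mulVec_apply_le_mulVec_apply hBnn hp' i
  have ha'a := mulVec_apply_le_mulVec_apply hBnn hpp i
  refine ⟨sub_nonneg.2 (div_add_le_div_add hui.le (by linarith) (by linarith)), ?_⟩
  have hrhs : (((diagonal fun j => (1 - pstar j) * (1 - pstar j) / (α j * s j + δ j)) * B) *ᵥ
      (fun j => p j - p' j)) i = (1 - pstar i) * (1 - pstar i) / (α i * s i + δ i) *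
        ((lam i + (B *ᵥ p) i) - (lam i + (B *ᵥ p') i)) := by
    rw [← mulVec_mulVec, mulVec_diagonal, add_sub_add_left_eq_sub, ← Pi.sub_apply, ← mulVec_sub]
    rfl
  beta_reduce
  rw [hrhs, ← div_sq_eq_of_mul_eq hui.ne' hfix]
  exact div_add_sub_div_add_le hui.le hA (by linarith) (by linarith)

theorem statement3 {N : ℕ} (hN : 2 ≤ N)
    (B : Matrix (Fin N) (Fin N) ℝ) (hBnn : ∀ i j, 0 ≤ B i j) (hBirr : MatIrred B)
    (lam δ α s : Fin N → ℝ)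
    (hlam : ∀ i, 0 ≤ lam i) (hlam0 : lam ≠ 0)
    (hδ : ∀ i, 0 < δ i) (hα : ∀ i, 0 < α i) (hs : ∀ i, 0 ≤ s i)
    (pstar : Fin N → ℝ) (hpstar : ∀ i, 0 < pstar i ∧ pstar i < 1)
    (hpeq : gfun B lam δ α s pstar = 0)
    (u : Fin N → ℝ) (hu : u = fun i => α i * s i + δ i)
    (H : (Fin N → ℝ) → (Fin N → ℝ))
    (hH : H = fun p i => (lam i + B.mulVec p i) / (lam i + B.mulVec p i + u i)) :
    ∀ p p' : Fin N → ℝ, (∀ i, pstar i ≤ p' i) → (∀ i, p' i ≤ p i) →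
      ∀ i, 0 ≤ H p i - H p' i ∧
        H p i - H p' i ≤
          ((Matrix.diagonal (fun j => (1 - pstar j) * (1 - pstar j) / u j)) * B).mulVec
            (fun j => p j - p' j) i :=
  statement3_general B hBnn lam δ α s hδ hα hs pstar hpstar hpeq u hu H hH
end
end

section
/- Let B ∈ ℝ^{N×N} be entrywise nonnegative and irreducible, let λ ∈ ℝ^N be entrywise nonnegative with λ ≠ 0, let p ∈ ℝ^N be entrywise positive, and let z ∈ ℝ^N satisfy (diag(z) − B)p = λ. Then diag(z) − B is invertible, its inverse is entrywise nonnegative, and every complex eigenvalue of diag(z) − B has positive real part (i.e., diag(z) − B is a nonsingular M-matrix). -/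
/-!
Write `A = diagonal z - B`, so that `A p = λ ≥ 0` with `p > 0` and `λ ≠ 0`. Everything follows
from a weighted maximum principle: if `q ≥ 0` and `A q ≤ 0`, then `q = 0`. Indeed, let `r p` be
the smallest multiple of `p` dominating `q`; then `w = r p - q ≥ 0` vanishes somewhere and
`A w = r λ - A q ≥ 0`. At a zero `i` of `w` this reads `∑ⱼ B i j * w j ≤ 0`, so `w` also
vanishes at every `j` with `B i j > 0`, and by irreducibility `w = 0`. Then `A q = r λ ≤ 0`
forces `r = 0`.

Applied to the negative part of `x` with `A x ≥ 0`, this gives `x ≥ 0`, so `A` is injective and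
`A⁻¹ ≥ 0`. Applied to `|v|` for an eigenvector `v` with eigenvalue `μ`, `re μ ≤ 0`, it gives
`v = 0`, because `z i * |v i| ≤ |z i - μ| * |v i| ≤ ∑ⱼ B i j * |v j|`.
-/

noncomputable section

open Matrix

namespace Matrix

variable {ι : Type*} [Fintype ι] [DecidableEq ι]

theorem diagonal_sub_mulVec_apply {R : Type*} [CommRing R] (z : ι → R) (B : Matrix ι ι R)
    (v : ι → R) (i : ι) : ((diagonal z - B) *ᵥ v) i = z i * v i - ∑ j, B i j * v j := by
  rw [sub_mulVec, Pi.sub_apply, mulVec_diagonal]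
  rfl

variable {B : Matrix ι ι ℝ}

theorem mem_of_mem_of_pow_apply_pos (hB : ∀ i j, 0 ≤ B i j) {S : Set ι}
    (hS : ∀ i ∈ S, ∀ j, 0 < B i j → j ∈ S) :
    ∀ (k : ℕ) {i j : ι}, i ∈ S → 0 < (B ^ k) i j → j ∈ S
  | 0, i, j, hi, hij => by
    obtain rfl : i = j := by
      by_contra h
      simp [one_apply_ne h] at hij
    exact hi
  | k + 1, i, j, hi, hij => by
    rw [pow_succ, mul_apply] at hij
    obtain ⟨l, -, hl⟩ := Finset.exists_lt_of_sum_lt (f := fun _ => (0 : ℝ))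
      (g := fun l => (B ^ k) i l * B l j) (by rwa [Finset.sum_const_zero])
    have hkl : 0 < (B ^ k) i l := pos_of_mul_pos_left hl (hB l j)
    exact hS l (mem_of_mem_of_pow_apply_pos hB hS k hi hkl) j (pos_of_mul_pos_right hl hkl.le)

theorem eq_zero_of_mulVec_nonneg_of_apply_eq_zero (hB : ∀ i j, 0 ≤ B i j)
    (hBirr : ∀ i j, ∃ k : ℕ, 0 < (B ^ k) i j) {z w : ι → ℝ} (hw : 0 ≤ w)
    (hAw : 0 ≤ (diagonal z - B) *ᵥ w) {i : ι} (hi : w i = 0) : w = 0 := by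
  have hclosed : ∀ l ∈ {j | w j = 0}, ∀ j, 0 < B l j → j ∈ {j | w j = 0} := by
    intro l (hl : w l = 0) j hlj
    have hterm : ∀ j ∈ Finset.univ, 0 ≤ B l j * w j := fun j _ => mul_nonneg (hB l j) (hw j)
    have hsum : ∑ j, B l j * w j = 0 := by
      have hAwl : 0 ≤ ((diagonal z - B) *ᵥ w) l := hAw l
      rw [diagonal_sub_mulVec_apply, hl, mul_zero, zero_sub] at hAwl
      exact le_antisymm (neg_nonneg.1 hAwl) (Finset.sum_nonneg hterm)
    have hj := (Finset.sum_eq_zero_iff_of_nonneg hterm).1 hsum j (Finset.mem_univ j)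
    exact (mul_eq_zero.1 hj).resolve_left hlj.ne'
  funext j
  obtain ⟨k, hk⟩ := hBirr i j
  exact mem_of_mem_of_pow_apply_pos hB hclosed k hi hk

theorem eq_zero_of_nonneg_of_mulVec_nonpos (hB : ∀ i j, 0 ≤ B i j)
    (hBirr : ∀ i j, ∃ k : ℕ, 0 < (B ^ k) i j) {z p lam q : ι → ℝ} (hp : ∀ i, 0 < p i)
    (hlam : 0 ≤ lam) (hlam0 : lam ≠ 0) (hz : (diagonal z - B) *ᵥ p = lam) (hq : 0 ≤ q)
    (hAq : (diagonal z - B) *ᵥ q ≤ 0) : q = 0 := by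
  obtain ⟨k, hk⟩ := Function.ne_iff.1 hlam0
  have : Nonempty ι := ⟨k⟩
  obtain ⟨i, hi⟩ := Finite.exists_max fun j => q j / p j
  set r := q i / p i
  have hr : 0 ≤ r := div_nonneg (hq i) (hp i).le
  have hqr : q = r • p := by
    refine (sub_eq_zero.1 (eq_zero_of_mulVec_nonneg_of_apply_eq_zero hB hBirr (z := z)
      (w := r • p - q) (fun j => ?_) ?_ (i := i) ?_)).symm
    · simpa [← div_le_iff₀ (hp j)] using hi j
    · rw [mulVec_sub, mulVec_smul, hz]
      exact sub_nonneg.2 (hAq.trans (smul_nonneg hr hlam))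
    · simp [r, div_mul_cancel₀ _ (hp i).ne']
  have hrk : r * lam k ≤ 0 := by simpa [hqr, mulVec_smul, hz] using hAq k
  have hr0 : r = 0 := le_antisymm (nonpos_of_mul_nonpos_left hrk ((hlam k).lt_of_ne' hk)) hr
  simp [hqr, hr0]

theorem nonneg_of_mulVec_nonneg (hB : ∀ i j, 0 ≤ B i j)
    (hBirr : ∀ i j, ∃ k : ℕ, 0 < (B ^ k) i j) {z p lam x : ι → ℝ} (hp : ∀ i, 0 < p i)
    (hlam : 0 ≤ lam) (hlam0 : lam ≠ 0) (hz : (diagonal z - B) *ᵥ p = lam)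
    (hAx : 0 ≤ (diagonal z - B) *ᵥ x) : 0 ≤ x := by
  refine negPart_eq_zero.1 <|
    eq_zero_of_nonneg_of_mulVec_nonpos hB hBirr hp hlam hlam0 hz (negPart_nonneg x) fun i => ?_
  rw [diagonal_sub_mulVec_apply, Pi.zero_apply, sub_nonpos, Pi.negPart_apply]
  have hsum : ∑ j, B i j * -x j ≤ ∑ j, B i j * x⁻ j :=
    Finset.sum_le_sum fun j _ => mul_le_mul_of_nonneg_left (neg_le_negPart (x j)) (hB i j)
  rcases le_or_gt 0 (x i) with hxi | hxi
  · rw [negPart_eq_zero.2 hxi, mul_zero]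
    exact Finset.sum_nonneg fun j _ => mul_nonneg (hB i j) (negPart_nonneg _)
  · have hAxi : 0 ≤ ((diagonal z - B) *ᵥ x) i := hAx i
    rw [diagonal_sub_mulVec_apply] at hAxi
    simp only [mul_neg, Finset.sum_neg_distrib] at hsum
    rw [negPart_eq_neg.2 hxi.le, mul_neg]
    linarith

theorem isUnit_diagonal_sub (hB : ∀ i j, 0 ≤ B i j)
    (hBirr : ∀ i j, ∃ k : ℕ, 0 < (B ^ k) i j) {z p lam : ι → ℝ} (hp : ∀ i, 0 < p i)
    (hlam : 0 ≤ lam) (hlam0 : lam ≠ 0) (hz : (diagonal z - B) *ᵥ p = lam) :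
    IsUnit (diagonal z - B) := by
  refine mulVec_injective_iff_isUnit.1 fun x y hxy => sub_eq_zero.1 ?_
  have hker : (diagonal z - B) *ᵥ (x - y) = 0 := by rw [mulVec_sub, hxy, sub_self]
  have hnonneg := nonneg_of_mulVec_nonneg hB hBirr hp hlam hlam0 hz hker.ge
  have hnonpos := nonneg_of_mulVec_nonneg hB hBirr hp hlam hlam0 hz (x := -(x - y))
    (by rw [mulVec_neg, hker, neg_zero])
  exact le_antisymm (neg_nonneg.1 hnonpos) hnonneg

theorem inv_diagonal_sub_apply_nonneg (hB : ∀ i j, 0 ≤ B i j)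
    (hBirr : ∀ i j, ∃ k : ℕ, 0 < (B ^ k) i j) {z p lam : ι → ℝ} (hp : ∀ i, 0 < p i)
    (hlam : 0 ≤ lam) (hlam0 : lam ≠ 0) (hz : (diagonal z - B) *ᵥ p = lam) (i j : ι) :
    0 ≤ (diagonal z - B)⁻¹ i j := by
  have hdet := (isUnit_iff_isUnit_det _).1 (isUnit_diagonal_sub hB hBirr hp hlam hlam0 hz)
  have hcol : 0 ≤ (diagonal z - B)⁻¹ *ᵥ Pi.single j 1 := by
    refine nonneg_of_mulVec_nonneg hB hBirr hp hlam hlam0 hz ?_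
    rw [mulVec_mulVec, mul_nonsing_inv _ hdet, one_mulVec]
    exact Pi.single_nonneg.2 zero_le_one
  simpa [mulVec_single_one] using hcol i

theorem re_pos_of_mem_spectrum_diagonal_sub (hB : ∀ i j, 0 ≤ B i j)
    (hBirr : ∀ i j, ∃ k : ℕ, 0 < (B ^ k) i j) {z p lam : ι → ℝ} (hp : ∀ i, 0 < p i)
    (hlam : 0 ≤ lam) (hlam0 : lam ≠ 0) (hz : (diagonal z - B) *ᵥ p = lam) {μ : ℂ}
    (hμ : μ ∈ spectrum ℂ ((diagonal z - B).map Complex.ofReal)) : 0 < μ.re := by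
  by_contra! hre
  rw [← spectrum_toLin', ← Module.End.hasEigenvalue_iff_mem_spectrum] at hμ
  obtain ⟨v, hv⟩ := hμ.exists_hasEigenvector
  have heigen : ∀ i, (z i - μ) * v i = ∑ j, B i j * v j := fun i => by
    have := congrFun hv.apply_eq_smul i
    rw [toLin'_apply, Matrix.map_sub _ Complex.ofReal_sub, diagonal_map Complex.ofReal_zero,
      diagonal_sub_mulVec_apply] at this
    simp only [map_apply, Pi.smul_apply, smul_eq_mul] at this
    linear_combination this
  have hnorm : (fun i => ‖v i‖) = 0 := by
    refine eq_zero_of_nonneg_of_mulVec_nonpos hB hBirr hp hlam hlam0 hz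
      (fun i => norm_nonneg _) fun i => ?_
    rw [diagonal_sub_mulVec_apply, Pi.zero_apply, sub_nonpos]
    have hzi : z i ≤ ‖(z i : ℂ) - μ‖ :=
      le_trans (by simpa using hre) (Complex.re_le_norm ((z i : ℂ) - μ))
    calc z i * ‖v i‖ ≤ ‖(z i : ℂ) - μ‖ * ‖v i‖ := by gcongr
      _ = ‖∑ j, (B i j : ℂ) * v j‖ := by rw [← norm_mul, heigen]
      _ ≤ ∑ j, ‖(B i j : ℂ) * v j‖ := norm_sum_le _ _
      _ = ∑ j, B i j * ‖v j‖ := by simp [abs_of_nonneg (hB _ _)]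
  exact hv.2 (funext fun i => norm_eq_zero.1 (congrFun hnorm i))

end Matrix

theorem statement4_general {N : ℕ}
    (B : Matrix (Fin N) (Fin N) ℝ) (hBnn : ∀ i j, 0 ≤ B i j) (hBirr : MatIrred B)
    (lam : Fin N → ℝ) (hlam : ∀ i, 0 ≤ lam i) (hlam0 : lam ≠ 0)
    (p : Fin N → ℝ) (hp : ∀ i, 0 < p i)
    (z : Fin N → ℝ) (hz : (Matrix.diagonal z - B).mulVec p = lam) :
    IsUnit (Matrix.diagonal z - B) ∧
    (∀ i j, 0 ≤ (Matrix.diagonal z - B)⁻¹ i j) ∧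
    (∀ μ ∈ spectrum ℂ ((Matrix.diagonal z - B).map Complex.ofReal), 0 < μ.re) := by
  have hpow : ∀ i j, ∃ k : ℕ, 0 < (B ^ k) i j := fun i j => (hBirr i j).imp fun _ => And.right
  exact ⟨isUnit_diagonal_sub hBnn hpow hp hlam hlam0 hz,
    inv_diagonal_sub_apply_nonneg hBnn hpow hp hlam hlam0 hz,
    fun _ => re_pos_of_mem_spectrum_diagonal_sub hBnn hpow hp hlam hlam0 hz⟩

theorem statement4 {N : ℕ} (hN : 2 ≤ N)
    (B : Matrix (Fin N) (Fin N) ℝ) (hBnn : ∀ i j, 0 ≤ B i j) (hBirr : MatIrred B)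
    (lam : Fin N → ℝ) (hlam : ∀ i, 0 ≤ lam i) (hlam0 : lam ≠ 0)
    (p : Fin N → ℝ) (hp : ∀ i, 0 < p i)
    (z : Fin N → ℝ) (hz : (Matrix.diagonal z - B).mulVec p = lam) :
    IsUnit (Matrix.diagonal z - B) ∧
    (∀ i j, 0 ≤ (Matrix.diagonal z - B)⁻¹ i j) ∧
    (∀ μ ∈ spectrum ℂ ((Matrix.diagonal z - B).map Complex.ofReal), 0 < μ.re) :=
  statement4_general B hBnn hBirr lam hlam hlam0 p hp z hz
end
end

section
/- Let B ∈ ℝ^{N×N} be entrywise nonnegative. Then the set Ω := { z ∈ ℝ^N : z ≥ 0 and every complex eigenvalue of diag(z) − B has positive real part } is a convex subset of ℝ^N. -/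
/-!
For `B ≥ 0`, every eigenvalue of `diag z - B` has positive real part exactly when
`diag z - B` is semipositive, i.e. `B x < z x` entrywise for some `x > 0`.
If it is, a weighted Gershgorin estimate at an index maximising `|vᵢ| / xᵢ` locates the
eigenvalues. Conversely, along the ray `t ↦ z + t` semipositivity is an open condition that
holds for large `t`; at a limit point `t ≥ 0` the matrix `diag (z + t) - B` is invertible, and
the solution `y` of `(diag (z + t) - B) y = 1` is nonnegative because nearby semipositive
matrices are monotone (`M y ≥ 0 → y ≥ 0`), so `y` itself witnesses semipositivity.
Finally, if `x₁, x₂` witness `z₁, z₂`, the geometric mean `x₁ ^ a * x₂ ^ b` witnesses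
`a z₁ + b z₂`, by Hölder's inequality and the weighted AM-GM inequality.
-/

open Matrix Finset Filter Topology Set

variable {n : Type*} [Fintype n]

theorem Real.sum_rpow_mul_rpow_le {ι : Type*} (s : Finset ι) {a b : ℝ} (ha : 0 < a)
    (hb : 0 < b) (hab : a + b = 1) {f g : ι → ℝ} (hf : ∀ i ∈ s, 0 ≤ f i) (hg : ∀ i ∈ s, 0 ≤ g i) :
    ∑ i ∈ s, f i ^ a * g i ^ b ≤ (∑ i ∈ s, f i) ^ a * (∑ i ∈ s, g i) ^ b := by
  have := Real.inner_le_Lp_mul_Lq_of_nonneg s (Real.HolderConjugate.inv_inv ha hb hab)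
    (fun i hi => Real.rpow_nonneg (hf i hi) a) (fun i hi => Real.rpow_nonneg (hg i hi) b)
  rwa [sum_congr rfl fun i hi => Real.rpow_rpow_inv (hf i hi) ha.ne',
    sum_congr rfl fun i hi => Real.rpow_rpow_inv (hg i hi) hb.ne', one_div, one_div, inv_inv,
    inv_inv] at this

theorem Matrix.exists_mulVec_eq_smul_of_mem_spectrum [DecidableEq n] {K : Type*} [Field K]
    {A : Matrix n n K} {μ : K} (hμ : μ ∈ spectrum K A) :
    ∃ v, v ≠ 0 ∧ A *ᵥ v = μ • v := by
  rw [← spectrum_toLin', ← Module.End.hasEigenvalue_iff_mem_spectrum] at hμ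
  obtain ⟨v, hv⟩ := hμ.exists_hasEigenvector
  exact ⟨v, hv.2, hv.apply_eq_smul⟩

theorem Matrix.ofReal_mem_spectrum_map_ofReal [DecidableEq n] {A : Matrix n n ℝ} {r : ℝ}
    (hr : r ∈ spectrum ℝ A) :
    (r : ℂ) ∈ spectrum ℂ (A.map Complex.ofReal) := by
  rw [mem_spectrum_iff_isRoot_charpoly] at hr ⊢
  exact charpoly_map A Complex.ofRealHom ▸ hr.map

theorem Matrix.isUnit_add_smul_one_of_forall_re_pos [DecidableEq n] {A : Matrix n n ℝ}
    (hA : ∀ μ ∈ spectrum ℂ (A.map Complex.ofReal), 0 < μ.re)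
    {t : ℝ} (ht : 0 ≤ t) : IsUnit (A + t • 1) := by
  by_contra h
  have hmem : -t ∈ spectrum ℝ A := by
    rw [spectrum.mem_iff, Algebra.algebraMap_eq_smul_one, neg_smul, ← neg_add', IsUnit.neg_iff,
      add_comm]
    exact h
  have := hA _ (ofReal_mem_spectrum_map_ofReal hmem)
  simp only [Complex.ofReal_neg, Complex.neg_re, Complex.ofReal_re] at this
  linarith

def semipositiveDiagonals (B : Matrix n n ℝ) : Set (n → ℝ) :=
  {d | ∃ x : n → ℝ, (∀ i, 0 < x i) ∧ ∀ i, (B *ᵥ x) i < d i * x i}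

section
variable {B : Matrix n n ℝ}

theorem mulVec_apply_nonneg (hB : ∀ i j, 0 ≤ B i j) {x : n → ℝ} (hx : ∀ j, 0 ≤ x j)
    (i : n) : 0 ≤ (B *ᵥ x) i :=
  sum_nonneg fun j _ => mul_nonneg (hB i j) (hx j)

theorem pos_of_mem_semipositiveDiagonals (hB : ∀ i j, 0 ≤ B i j) {d : n → ℝ}
    (hd : d ∈ semipositiveDiagonals B) (i : n) : 0 < d i := by
  obtain ⟨x, hx, hBx⟩ := hd
  exact pos_of_mul_pos_left ((mulVec_apply_nonneg hB (fun j => (hx j).le) i).trans_lt (hBx i))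
    (hx i).le

theorem isOpen_semipositiveDiagonals (B : Matrix n n ℝ) : IsOpen (semipositiveDiagonals B) := by
  simp only [semipositiveDiagonals, ofPred_exists, ofPred_and, ofPred_forall]
  exact isOpen_iUnion fun x => (isOpen_iInter_of_finite fun _ => isOpen_const).inter <|
    isOpen_iInter_of_finite fun i => isOpen_lt continuous_const (by fun_prop)

theorem nonneg_of_mulVec_le_of_mem_semipositiveDiagonals (hB : ∀ i j, 0 ≤ B i j) {d : n → ℝ}
    (hd : d ∈ semipositiveDiagonals B) {y : n → ℝ} (hy : ∀ i, (B *ᵥ y) i ≤ d i * y i)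
    (k : n) :
    0 ≤ y k := by
  obtain ⟨x, hx, hBx⟩ := hd
  by_contra! hyk
  obtain ⟨i, -, hi⟩ := exists_min_image univ (fun j => y j / x j) ⟨k, mem_univ k⟩
  set m := y i / x i
  have hm : m < 0 := (hi k (mem_univ k)).trans_lt (div_neg_of_neg_of_pos hyk (hx k))
  have hy_ge : ∀ j, m * x j ≤ y j := fun j => (le_div_iff₀ (hx j)).1 (hi j (mem_univ j))
  have hBy_ge : m * (B *ᵥ x) i ≤ (B *ᵥ y) i := by
    rw [mulVec, dotProduct, mulVec, dotProduct, mul_sum]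
    exact sum_le_sum fun j _ => calc
      m * (B i j * x j) = B i j * (m * x j) := by ring
      _ ≤ B i j * y j := mul_le_mul_of_nonneg_left (hy_ge j) (hB i j)
  have hyi : y i = m * x i := by simp [m, (hx i).ne']
  have : m * (d i * x i) < m * (d i * x i) := calc
    m * (d i * x i) < m * (B *ᵥ x) i := mul_lt_mul_of_neg_left (hBx i) hm
    _ ≤ (B *ᵥ y) i := hBy_ge
    _ ≤ d i * y i := hy i
    _ = m * (d i * x i) := by rw [hyi]; ring
  exact lt_irrefl _ this

theorem convex_semipositiveDiagonals (hB : ∀ i j, 0 ≤ B i j) :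
    Convex ℝ (semipositiveDiagonals B) := by
  refine convex_iff_forall_pos.2 fun d₁ hd₁ d₂ hd₂ a b ha hb hab => ?_
  have hd₁pos := pos_of_mem_semipositiveDiagonals hB hd₁
  have hd₂pos := pos_of_mem_semipositiveDiagonals hB hd₂
  obtain ⟨x₁, hx₁, hBx₁⟩ := hd₁
  obtain ⟨x₂, hx₂, hBx₂⟩ := hd₂
  have hx : ∀ j, 0 < x₁ j ^ a * x₂ j ^ b := fun j =>
    mul_pos (Real.rpow_pos_of_pos (hx₁ j) a) (Real.rpow_pos_of_pos (hx₂ j) b)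
  refine ⟨fun j => x₁ j ^ a * x₂ j ^ b, hx, fun i => ?_⟩
  have hBx₁0 := mulVec_apply_nonneg hB (fun j => (hx₁ j).le) i
  have hBx₂0 := mulVec_apply_nonneg hB (fun j => (hx₂ j).le) i
  have hB_split : ∀ j, B i j = B i j ^ a * B i j ^ b := fun j => by
    rw [← Real.rpow_add' (hB i j) (by simp [hab]), hab, Real.rpow_one]
  calc (B *ᵥ fun j => x₁ j ^ a * x₂ j ^ b) i
      = ∑ j, (B i j * x₁ j) ^ a * (B i j * x₂ j) ^ b := by
        refine sum_congr rfl fun j _ => ?_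
        rw [Real.mul_rpow (hB i j) (hx₁ j).le, Real.mul_rpow (hB i j) (hx₂ j).le,
          mul_mul_mul_comm, ← hB_split]
    _ ≤ (B *ᵥ x₁) i ^ a * (B *ᵥ x₂) i ^ b :=
        Real.sum_rpow_mul_rpow_le _ ha hb hab (fun j _ => mul_nonneg (hB i j) (hx₁ j).le)
          (fun j _ => mul_nonneg (hB i j) (hx₂ j).le)
    _ < (d₁ i * x₁ i) ^ a * (d₂ i * x₂ i) ^ b :=
        mul_lt_mul'' (Real.rpow_lt_rpow hBx₁0 (hBx₁ i) ha)
          (Real.rpow_lt_rpow hBx₂0 (hBx₂ i) hb) (Real.rpow_nonneg hBx₁0 a)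
          (Real.rpow_nonneg hBx₂0 b)
    _ = d₁ i ^ a * d₂ i ^ b * (x₁ i ^ a * x₂ i ^ b) := by
        rw [Real.mul_rpow (hd₁pos i).le (hx₁ i).le, Real.mul_rpow (hd₂pos i).le (hx₂ i).le]
        ring
    _ ≤ (a • d₁ + b • d₂) i * (x₁ i ^ a * x₂ i ^ b) :=
        mul_le_mul_of_nonneg_right (Real.geom_mean_le_arith_mean2_weighted ha.le hb.le
          (hd₁pos i).le (hd₂pos i).le hab) (hx i).le

theorem re_pos_of_mem_spectrum [DecidableEq n] (hB : ∀ i j, 0 ≤ B i j) {d : n → ℝ}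
    (hd : d ∈ semipositiveDiagonals B) {μ : ℂ}
    (hμ : μ ∈ spectrum ℂ ((diagonal d - B).map Complex.ofReal)) : 0 < μ.re := by
  obtain ⟨x, hx, hBx⟩ := hd
  obtain ⟨v, hv, hMv⟩ := exists_mulVec_eq_smul_of_mem_spectrum hμ
  obtain ⟨k, hk⟩ := Function.ne_iff.1 hv
  obtain ⟨i, -, hi⟩ := exists_max_image univ (fun j => ‖v j‖ / x j) ⟨k, mem_univ k⟩
  set c := ‖v i‖ / x i
  have hc : 0 < c := (div_pos (norm_pos_iff.2 hk) (hx k)).trans_le (hi k (mem_univ k))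
  have hv_le : ∀ j, ‖v j‖ ≤ c * x j := fun j => (div_le_iff₀ (hx j)).1 (hi j (mem_univ j))
  have hvi : ‖v i‖ = c * x i := by simp [c, (hx i).ne']
  have hrow : ((d i : ℂ) - μ) * v i = ∑ j, (B i j : ℂ) * v j := by
    have := congrFun hMv i
    rw [Matrix.map_sub _ Complex.ofReal_sub, diagonal_map Complex.ofReal_zero, sub_mulVec,
      Pi.sub_apply, mulVec_diagonal] at this
    simp only [mulVec, dotProduct, map_apply, Pi.smul_apply, smul_eq_mul] at this
    linear_combination this
  have hnorm : ‖(d i : ℂ) - μ‖ * (c * x i) < d i * (c * x i) :=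
    calc ‖(d i : ℂ) - μ‖ * (c * x i) = ‖∑ j, (B i j : ℂ) * v j‖ := by
          rw [← hvi, ← norm_mul, hrow]
      _ ≤ ∑ j, B i j * ‖v j‖ :=
        (norm_sum_le _ _).trans_eq (by simp [abs_of_nonneg (hB i _)])
      _ ≤ ∑ j, B i j * (c * x j) := by gcongr with j; exacts [hB i j, hv_le j]
      _ = c * (B *ᵥ x) i := by
        rw [mulVec, dotProduct, mul_sum]
        exact sum_congr rfl fun j _ => by ring
      _ < c * (d i * x i) := by gcongr; exact hBx i
      _ = d i * (c * x i) := by ring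
  have hlt := lt_of_mul_lt_mul_right hnorm (mul_pos hc (hx i)).le
  have hre := Complex.re_le_norm ((d i : ℂ) - μ)
  simp only [Complex.sub_re, Complex.ofReal_re] at hre
  linarith

theorem mem_semipositiveDiagonals_of_forall_re_pos [DecidableEq n] (hB : ∀ i j, 0 ≤ B i j)
    {z : n → ℝ}
    (hz : ∀ μ ∈ spectrum ℂ ((diagonal z - B).map Complex.ofReal), 0 < μ.re) :
    z ∈ semipositiveDiagonals B := by
  set u : Set ℝ := {t | (fun i => z i + t) ∈ semipositiveDiagonals B}
  suffices Set.Ici 0 ⊆ u by simpa [u] using this (Set.mem_Ici.2 le_rfl)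
  refine isPreconnected_Ici.subset_of_closure_inter_subset
    ((isOpen_semipositiveDiagonals B).preimage
      (continuous_pi fun i => continuous_const.add continuous_id)) ?_ ?_
  · set t := ∑ i, |(B *ᵥ 1) i - z i| + 1
    refine ⟨t, Set.mem_Ici.2 (by positivity), 1, fun _ => one_pos, fun i => ?_⟩
    have := single_le_sum (fun j _ => abs_nonneg ((B *ᵥ 1) j - z j)) (mem_univ i)
    simp only [Pi.one_apply, mul_one]
    linarith [le_abs_self ((B *ᵥ 1) i - z i)]
  · rintro t ⟨htu, ht⟩
    obtain ⟨y, hy⟩ :=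
      mulVec_surjective_iff_isUnit.2 (isUnit_add_smul_one_of_forall_re_pos hz ht) 1
    have hBy : ∀ i, (B *ᵥ y) i = (z i + t) * y i - 1 := fun i => by
      have := congrFun hy i
      simp only [add_mulVec, sub_mulVec, smul_mulVec, one_mulVec, Pi.add_apply, Pi.sub_apply,
        Pi.smul_apply, mulVec_diagonal, smul_eq_mul, Pi.one_apply] at this
      linarith
    have hnear : ∀ᶠ s in 𝓝 t, ∀ i, (B *ᵥ y) i ≤ (z i + s) * y i := by
      refine eventually_all.2 fun i => ?_
      have hcont : Continuous fun s => (z i + s) * y i - (B *ᵥ y) i := by fun_prop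
      filter_upwards [(hcont.tendsto t).eventually_const_lt
        (show (0 : ℝ) < (z i + t) * y i - (B *ᵥ y) i by linarith [hBy i])] with s hs
      linarith
    obtain ⟨s, hsu, hs⟩ := ((mem_closure_iff_frequently.1 htu).and_eventually hnear).exists
    have hy0 := nonneg_of_mulVec_le_of_mem_semipositiveDiagonals hB hsu hs
    refine ⟨y, fun i => (hy0 i).lt_of_ne' fun hyi => ?_, fun i => by rw [hBy]; linarith⟩
    have := mulVec_apply_nonneg hB hy0 i
    rw [hBy, hyi] at this
    linarith
end

theorem statement6_general {N : ℕ}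
    (B : Matrix (Fin N) (Fin N) ℝ) (hBnn : ∀ i j, 0 ≤ B i j) :
    Convex ℝ {z : Fin N → ℝ | (∀ i, 0 ≤ z i) ∧
      ∀ μ ∈ spectrum ℂ ((Matrix.diagonal z - B).map Complex.ofReal), 0 < μ.re} := by
  convert convex_semipositiveDiagonals hBnn using 1
  ext z
  exact ⟨fun hz => mem_semipositiveDiagonals_of_forall_re_pos hBnn hz.2,
    fun hz => ⟨fun i => (pos_of_mem_semipositiveDiagonals hBnn hz i).le,
      fun _ hμ => re_pos_of_mem_spectrum hBnn hz hμ⟩⟩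

theorem statement6 {N : ℕ} (hN : 2 ≤ N)
    (B : Matrix (Fin N) (Fin N) ℝ) (hBnn : ∀ i j, 0 ≤ B i j) :
    Convex ℝ {z : Fin N → ℝ | (∀ i, 0 ≤ z i) ∧
      ∀ μ ∈ spectrum ℂ ((Matrix.diagonal z - B).map Complex.ofReal), 0 < μ.re} :=
  statement6_general B hBnn
end

section
/- Let q ∈ ℝ^N satisfy 0 < q_i < 1 for all i, and set λ′ := λ + q∘(Bq) and B′ := diag(1 − q)·B. Consider problem (S_R1): minimize w(s) + cᵀe^{−y} over s ≥ 0, y ∈ ℝ^N, t ∈ ℝ^N, U ∈ ℝ^{N×N} subject to t + U·1 = α∘s + δ + λ + Bq, t ≥ λ′∘e^{y}, and U ≥ diag(e^{y})·B′·diag(e^{−y}) entrywise. Then at every feasible point attaining the optimal value of (S_R1), both inequality constraints are active: t = λ′∘e^{y} and U = diag(e^{y})·B′·diag(e^{−y}); that is, this convex relaxation is exact. -/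
/-!
If row `i` of the relaxation were slack at an optimum, i.e. `t i + ∑ j, U i j` exceeded the sum of
its lower bounds, one could raise `y i` by some `η > 0`: the lower bounds of row `i` grow by the
factor `exp η`, which the slack absorbs, while those of every other row only shrink because
`B' ≥ 0`. The term `c i * exp (-(y i))` of the objective then strictly decreases, contradicting
optimality. Hence every row sum is tight, and since each of its summands dominates its lower
bound, every constraint is active.
-/

noncomputable section

open Matrix

/-- Feasibility for the convex relaxation (S_R1) of the SCP subproblem. -/
def FeasSR1 {N : ℕ} (B : Matrix (Fin N) (Fin N) ℝ) (lam δ α lam' : Fin N → ℝ)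
    (B' : Matrix (Fin N) (Fin N) ℝ) (q : Fin N → ℝ)
    (s y t : Fin N → ℝ) (U : Matrix (Fin N) (Fin N) ℝ) : Prop :=
  (∀ i, 0 ≤ s i) ∧
  (∀ i, t i + ∑ j, U i j = α i * s i + δ i + lam i + B.mulVec q i) ∧
  (∀ i, lam' i * Real.exp (y i) ≤ t i) ∧
  (∀ i j, Real.exp (y i) * B' i j * Real.exp (-(y j)) ≤ U i j)

open Real

theorem exists_pos_exp_mul_le {R T : ℝ} (h : R < T) : ∃ η, 0 < η ∧ exp η * R ≤ T := by
  rcases le_or_gt R 0 with hR | hR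
  · exact ⟨1, one_pos, by nlinarith [add_one_le_exp 1]⟩
  · refine ⟨log (T / R), log_pos ((one_lt_div hR).2 h), ?_⟩
    rw [exp_log (div_pos (hR.trans h) hR), div_mul_cancel₀ _ hR.ne']

theorem exp_mul_mul_exp_neg_le {a a' b b' m : ℝ} (hm : 0 ≤ m) (hb : b ≤ b') :
    exp a' * m * exp (-b') ≤ exp (a' - a) * (exp a * m * exp (-b)) :=
  calc exp a' * m * exp (-b') ≤ exp a' * m * exp (-b) := by gcongr
    _ = exp (a' - a) * (exp a * m * exp (-b)) := by rw [exp_sub]; field_simp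

theorem sum_mul_exp_neg_update_lt {ι : Type*} [Fintype ι] [DecidableEq ι] {c : ι → ℝ} {i : ι}
    (hc : 0 < c i) (y : ι → ℝ) {η : ℝ} (hη : 0 < η) :
    ∑ j, c j * exp (-(Function.update y i (y i + η) j)) < ∑ j, c j * exp (-(y j)) := by
  refine Finset.sum_lt_sum (fun j _ => ?_) ⟨i, Finset.mem_univ i, ?_⟩
  · rcases eq_or_ne j i with rfl | hj
    · simp only [Function.update_self]
      gcongr
      linarith
    · rw [Function.update_of_ne hj]
  · simp only [Function.update_self]
    gcongr
    linarith

theorem eq_and_forall_eq_of_add_sum_le {ι : Type*} [Fintype ι] {a t : ℝ} {b u : ι → ℝ}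
    (ha : a ≤ t) (hb : ∀ j, b j ≤ u j) (h : t + ∑ j, u j ≤ a + ∑ j, b j) :
    t = a ∧ ∀ j, u j = b j := by
  have hsum : ∑ j, b j ≤ ∑ j, u j := Finset.sum_le_sum fun j _ => hb j
  refine ⟨by linarith, fun j => ?_⟩
  have hsum_eq : ∑ j, b j = ∑ j, u j := by linarith
  exact ((Finset.sum_eq_sum_iff_of_le fun j _ => hb j).1 hsum_eq j (Finset.mem_univ j)).symm

namespace FeasSR1

variable {N : ℕ} {B B' : Matrix (Fin N) (Fin N) ℝ} {lam δ α lam' q s y t : Fin N → ℝ}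
  {U : Matrix (Fin N) (Fin N) ℝ}

/-- The witness replaces row `i` of `U` by `exp η` times its old lower bounds and lets `t i`
absorb the rest of the row sum. -/
theorem exists_update_y (hB' : ∀ i j, 0 ≤ B' i j) (h : FeasSR1 B lam δ α lam' B' q s y t U)
    (i : Fin N) {η : ℝ} (hη : 0 ≤ η)
    (hroom : exp η * (lam' i * exp (y i) + ∑ j, exp (y i) * B' i j * exp (-(y j))) ≤
      t i + ∑ j, U i j) :
    ∃ t' U', FeasSR1 B lam δ α lam' B' q s (Function.update y i (y i + η)) t' U' := by
  obtain ⟨hs, hrow, ht, hU⟩ := h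
  set y' := Function.update y i (y i + η)
  set S := ∑ j, exp (y i) * B' i j * exp (-(y j))
  have hy' : ∀ j, y j ≤ y' j := fun j => by
    rcases eq_or_ne j i with rfl | hj
    · simp [y', hη]
    · simp [y', hj]
  let U' := U.updateRow i fun j => exp η * (exp (y i) * B' i j * exp (-(y j)))
  have hU'i : ∑ j, U' i j = exp η * S := by simp [U', S, Finset.mul_sum]
  refine ⟨Function.update t i (t i + ∑ j, U i j - exp η * S), U', hs, fun k => ?_,
    fun k => ?_, fun k j => ?_⟩
  · rcases eq_or_ne k i with rfl | hk
    · rw [Function.update_self, hU'i, ← hrow k]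
      ring
    · simpa [U', hk] using hrow k
  · rcases eq_or_ne k i with rfl | hk
    · simp only [y', Function.update_self, exp_add]
      linarith
    · simpa [y', hk] using ht k
  · refine (exp_mul_mul_exp_neg_le (a := y k) (hB' k j) (hy' j)).trans ?_
    rcases eq_or_ne k i with rfl | hk
    · simp [y', U']
    · simpa [y', U', hk] using hU k j

theorem rowSum_le_of_optimal {w : (Fin N → ℝ) → ℝ} {c : Fin N → ℝ} (hB' : ∀ i j, 0 ≤ B' i j)
    (hc : ∀ i, 0 < c i) (h : FeasSR1 B lam δ α lam' B' q s y t U)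
    (hopt : ∀ (s' y' t' : Fin N → ℝ) (U' : Matrix (Fin N) (Fin N) ℝ),
      FeasSR1 B lam δ α lam' B' q s' y' t' U' →
      w s + ∑ i, c i * exp (-(y i)) ≤ w s' + ∑ i, c i * exp (-(y' i))) (i : Fin N) :
    t i + ∑ j, U i j ≤ lam' i * exp (y i) + ∑ j, exp (y i) * B' i j * exp (-(y j)) := by
  by_contra! hslack
  obtain ⟨η, hη, hroom⟩ := exists_pos_exp_mul_le hslack
  obtain ⟨t', U', h'⟩ := h.exists_update_y hB' i hη.le hroom
  have hle := hopt _ _ _ _ h'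
  linarith [sum_mul_exp_neg_update_lt (hc i) y hη]

end FeasSR1

theorem statement12_general {N : ℕ}
    (B : Matrix (Fin N) (Fin N) ℝ) (hBnn : ∀ i j, 0 ≤ B i j)
    (lam δ α : Fin N → ℝ)
    (w : (Fin N → ℝ) → ℝ)
    (c : Fin N → ℝ) (hc : ∀ i, 0 < c i)
    (q : Fin N → ℝ) (hq : ∀ i, 0 < q i ∧ q i < 1)
    (lam' : Fin N → ℝ)
    (B' : Matrix (Fin N) (Fin N) ℝ)
    (hB' : B' = Matrix.diagonal (fun i => 1 - q i) * B)
    (s y t : Fin N → ℝ) (U : Matrix (Fin N) (Fin N) ℝ)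
    (hfeas : FeasSR1 B lam δ α lam' B' q s y t U)
    (hopt : ∀ (s' y' t' : Fin N → ℝ) (U' : Matrix (Fin N) (Fin N) ℝ),
      FeasSR1 B lam δ α lam' B' q s' y' t' U' →
      w s + ∑ i, c i * Real.exp (-(y i)) ≤ w s' + ∑ i, c i * Real.exp (-(y' i))) :
    (∀ i, t i = lam' i * Real.exp (y i)) ∧
    (∀ i j, U i j = Real.exp (y i) * B' i j * Real.exp (-(y j))) := by
  have hB'nn : ∀ i j, 0 ≤ B' i j := fun i j => by
    rw [hB', diagonal_mul]
    exact mul_nonneg (sub_nonneg.2 (hq i).2.le) (hBnn i j)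
  have htight i := eq_and_forall_eq_of_add_sum_le (hfeas.2.2.1 i) (hfeas.2.2.2 i)
    (hfeas.rowSum_le_of_optimal hB'nn hc hopt i)
  exact ⟨fun i => (htight i).1, fun i j => (htight i).2 j⟩

theorem statement12 {N : ℕ} (hN : 2 ≤ N)
    (B : Matrix (Fin N) (Fin N) ℝ) (hBnn : ∀ i j, 0 ≤ B i j) (hBirr : MatIrred B)
    (lam δ α : Fin N → ℝ)
    (hlam : ∀ i, 0 ≤ lam i)
    (hδ : ∀ i, 0 < δ i) (hα : ∀ i, 0 < α i)
    (w : (Fin N → ℝ) → ℝ) (hwcont : Continuous w)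
    (hwconv : ConvexOn ℝ Set.univ w)
    (hwmono : ∀ s s' : Fin N → ℝ, s ≤ s' → s ≠ s' → w s < w s')
    (c : Fin N → ℝ) (hc : ∀ i, 0 < c i)
    (q : Fin N → ℝ) (hq : ∀ i, 0 < q i ∧ q i < 1)
    (lam' : Fin N → ℝ) (hlam' : lam' = fun i => lam i + q i * B.mulVec q i)
    (B' : Matrix (Fin N) (Fin N) ℝ)
    (hB' : B' = Matrix.diagonal (fun i => 1 - q i) * B)
    (s y t : Fin N → ℝ) (U : Matrix (Fin N) (Fin N) ℝ)
    (hfeas : FeasSR1 B lam δ α lam' B' q s y t U)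
    (hopt : ∀ (s' y' t' : Fin N → ℝ) (U' : Matrix (Fin N) (Fin N) ℝ),
      FeasSR1 B lam δ α lam' B' q s' y' t' U' →
      w s + ∑ i, c i * Real.exp (-(y i)) ≤ w s' + ∑ i, c i * Real.exp (-(y' i))) :
    (∀ i, t i = lam' i * Real.exp (y i)) ∧
    (∀ i j, U i j = Real.exp (y i) * B' i j * Real.exp (-(y j))) :=
  statement12_general B hBnn lam δ α w c hc q hq lam' B' hB' s y t U hfeas hopt
end
end

section
/- Let (s⋆, p⋆) satisfy s⋆ ≥ 0, 0 < p⋆_i < 1 for all i, and g(s⋆, p⋆) = 0, and define M(s⋆) := diag(α∘s⋆ + δ + λ + Bp⋆) − diag(1 − p⋆)·B. Then M(s⋆) is a nonsingular M-matrix: it is invertible, its inverse is entrywise nonnegative, and every complex eigenvalue of M(s⋆) has positive real part. -/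
/-!
The matrix `M` is a Z-matrix (nonpositive off-diagonal entries), and at the equilibrium
`M p⋆ = λ + p⋆ ∘ B p⋆`, which is entrywise positive because irreducibility gives every row of `B`
a positive entry. A Z-matrix `M` admitting a positive vector `p` with `M p > 0` is a nonsingular
M-matrix: comparing `v` with the largest multiple of `p` below it shows that `M v ≥ 0` forces
`v ≥ 0`, which gives injectivity and `M⁻¹ ≥ 0`; and after the similarity `diag(p)⁻¹ M diag(p)`
the rows are strictly diagonally dominant, so Gershgorin's theorem puts every eigenvalue in the
open right half-plane.
-/

noncomputable section

open Matrix

open Finset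

namespace Matrix

variable {ι : Type*} [Fintype ι]

def IsZMatrix (M : Matrix ι ι ℝ) : Prop :=
  ∀ i j, i ≠ j → M i j ≤ 0

theorem isZMatrix_diagonal_sub_diagonal_mul [DecidableEq ι] (d : ι → ℝ) {q : ι → ℝ}
    (hq : ∀ i, 0 ≤ q i) {B : Matrix ι ι ℝ} (hB : ∀ i j, 0 ≤ B i j) :
    (diagonal d - diagonal q * B).IsZMatrix := fun i j hij => by
  simp only [sub_apply, diagonal_mul, diagonal_apply_ne _ hij, zero_sub, neg_nonpos]
  exact mul_nonneg (hq i) (hB i j)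

namespace IsZMatrix

variable {M : Matrix ι ι ℝ} {p : ι → ℝ}

theorem nonneg_of_mulVec_nonneg (hM : M.IsZMatrix) (hp : ∀ i, 0 < p i)
    (hMp : ∀ i, 0 < (M *ᵥ p) i) {v : ι → ℝ} (hv : ∀ i, 0 ≤ (M *ᵥ v) i) (i : ι) :
    0 ≤ v i := by
  by_contra! hvi
  obtain ⟨k, -, hk⟩ := exists_min_image univ (fun i => v i / p i) ⟨i, mem_univ i⟩
  set c := v k / p k
  have hc : c < 0 := (hk i (mem_univ i)).trans_lt (div_neg_of_neg_of_pos hvi (hp i))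
  have hvk : v k = c * p k := (div_mul_cancel₀ _ (hp k).ne').symm
  have hlow : ∀ j, c * p j ≤ v j := fun j => (le_div_iff₀ (hp j)).mp (hk j (mem_univ j))
  have hle : (M *ᵥ v) k ≤ c * (M *ᵥ p) k := by
    simp only [mulVec, dotProduct, mul_sum]
    refine sum_le_sum fun j _ => ?_
    rcases eq_or_ne j k with rfl | hjk
    · exact le_of_eq (by rw [hvk]; ring)
    · nlinarith [hM k j hjk.symm, hlow j]
  linarith [hv k, mul_neg_of_neg_of_pos hc (hMp k)]

theorem isUnit [DecidableEq ι] (hM : M.IsZMatrix) (hp : ∀ i, 0 < p i)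
    (hMp : ∀ i, 0 < (M *ᵥ p) i) : IsUnit M := by
  refine mulVec_injective_iff_isUnit.mp fun x y hxy => funext fun i => ?_
  have hxy' : M *ᵥ (x - y) = 0 := by rw [mulVec_sub, hxy, sub_self]
  have hyx : M *ᵥ (y - x) = 0 := by rw [mulVec_sub, hxy, sub_self]
  have h1 := hM.nonneg_of_mulVec_nonneg hp hMp (v := x - y) (by simp [hxy']) i
  have h2 := hM.nonneg_of_mulVec_nonneg hp hMp (v := y - x) (by simp [hyx]) i
  simp only [Pi.sub_apply] at h1 h2
  linarith

theorem inv_nonneg [DecidableEq ι] (hM : M.IsZMatrix) (hp : ∀ i, 0 < p i)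
    (hMp : ∀ i, 0 < (M *ᵥ p) i) (i j : ι) : 0 ≤ M⁻¹ i j := by
  have hcol : M *ᵥ (M⁻¹ *ᵥ Pi.single j 1) = Pi.single j 1 := by
    rw [mulVec_mulVec, mul_nonsing_inv _ ((isUnit_iff_isUnit_det M).mp (hM.isUnit hp hMp)),
      one_mulVec]
  have := hM.nonneg_of_mulVec_nonneg hp hMp (v := M⁻¹ *ᵥ Pi.single j 1)
    (fun l => by rw [hcol, Pi.single_apply]; split_ifs <;> norm_num) i
  simpa [mulVec_single_one] using this

theorem sum_erase_neg_mul_lt [DecidableEq ι] (hMp : ∀ i, 0 < (M *ᵥ p) i) (k : ι) :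
    ∑ j ∈ univ.erase k, -M k j * p j < M k k * p k := by
  have hsplit := add_sum_erase univ (fun j => M k j * p j) (mem_univ k)
  simp only [neg_mul, sum_neg_distrib]
  have := hMp k
  simp only [mulVec, dotProduct] at this
  linarith

theorem re_pos_of_mem_spectrum [DecidableEq ι] (hM : M.IsZMatrix) (hp : ∀ i, 0 < p i)
    (hMp : ∀ i, 0 < (M *ᵥ p) i) {μ : ℂ} (hμ : μ ∈ spectrum ℂ (M.map Complex.ofReal)) :
    0 < μ.re := by
  have hp0 : ∀ i, (p i : ℂ) ≠ 0 := fun i => Complex.ofReal_ne_zero.mpr (hp i).ne'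
  let D : (Matrix ι ι ℂ)ˣ :=
    ⟨diagonal fun i => (p i : ℂ), diagonal fun i => (p i : ℂ)⁻¹,
      by simp [diagonal_mul_diagonal, hp0], by simp [diagonal_mul_diagonal, hp0]⟩
  rw [← spectrum.units_conjugate' (u := D), ← spectrum_toLin',
    ← Module.End.hasEigenvalue_iff_mem_spectrum] at hμ
  obtain ⟨k, hk⟩ := eigenvalue_mem_ball hμ
  have hentry : ∀ i j, ((D⁻¹ : (Matrix ι ι ℂ)ˣ) * M.map Complex.ofReal * D : Matrix ι ι ℂ) i j
      = ((p i)⁻¹ * M i j * p j : ℝ) := by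
    intro i j
    simp [D, diagonal_mul, mul_diagonal]
  rw [Metric.mem_closedBall, Complex.dist_eq] at hk
  simp only [hentry, Complex.norm_real, Real.norm_eq_abs] at hk
  have hkk : (p k)⁻¹ * M k k * p k = M k k := by field_simp [(hp k).ne']
  have hrad : ∑ j ∈ univ.erase k, |(p k)⁻¹ * M k j * p j|
      = (p k)⁻¹ * ∑ j ∈ univ.erase k, -M k j * p j := by
    rw [mul_sum]
    refine sum_congr rfl fun j hj => ?_
    have hkj := hM k j (ne_of_mem_erase hj).symm
    rw [abs_of_nonpos (mul_nonpos_of_nonpos_of_nonneg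
      (mul_nonpos_of_nonneg_of_nonpos (inv_pos.mpr (hp k)).le hkj) (hp j).le)]
    ring
  have hdom : (p k)⁻¹ * ∑ j ∈ univ.erase k, -M k j * p j < M k k :=
    (inv_mul_lt_iff₀ (hp k)).mpr (by linarith [sum_erase_neg_mul_lt hMp k])
  have hre : M k k - μ.re ≤ ‖μ - (M k k : ℂ)‖ := by
    have := Complex.abs_re_le_norm (μ - (M k k : ℂ))
    simp only [Complex.sub_re, Complex.ofReal_re] at this
    linarith [neg_abs_le (μ.re - M k k)]
  rw [hkk, hrad] at hk
  linarith

end IsZMatrix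

end Matrix

theorem MatIrred.exists_ne_zero {N : ℕ} {B : Matrix (Fin N) (Fin N) ℝ} (hB : MatIrred B)
    (i : Fin N) : ∃ j, B i j ≠ 0 := by
  by_contra! hrow
  obtain ⟨k, hk, hpos⟩ := hB i i
  obtain ⟨m, rfl⟩ := Nat.exists_eq_add_of_le' hk
  simp [pow_succ', mul_apply, hrow] at hpos

theorem MatIrred.mulVec_pos {N : ℕ} {B : Matrix (Fin N) (Fin N) ℝ} (hB : MatIrred B)
    (hBnn : ∀ i j, 0 ≤ B i j) {p : Fin N → ℝ} (hp : ∀ i, 0 < p i) (i : Fin N) :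
    0 < (B *ᵥ p) i := by
  obtain ⟨j, hj⟩ := hB.exists_ne_zero i
  exact sum_pos' (fun j _ => mul_nonneg (hBnn i j) (hp j).le)
    ⟨j, mem_univ j, mul_pos ((hBnn i j).lt_of_ne' hj) (hp j)⟩

theorem mulVec_eq_of_gfun_eq_zero {N : ℕ} {B : Matrix (Fin N) (Fin N) ℝ}
    {lam δ α s p : Fin N → ℝ} (hg : gfun B lam δ α s p = 0) :
    (diagonal (fun i => α i * s i + δ i + lam i + (B *ᵥ p) i) - diagonal (fun i => 1 - p i) * B)
      *ᵥ p = fun i => lam i + p i * (B *ᵥ p) i := by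
  ext i
  have hgi := congrFun hg i
  simp only [gfun, Pi.zero_apply] at hgi
  simp only [sub_mulVec, ← mulVec_mulVec, Pi.sub_apply, mulVec_diagonal]
  linear_combination -hgi

theorem statement13_general {N : ℕ}
    (B : Matrix (Fin N) (Fin N) ℝ) (hBnn : ∀ i j, 0 ≤ B i j) (hBirr : MatIrred B)
    (lam δ α : Fin N → ℝ)
    (hlam : ∀ i, 0 ≤ lam i)
    (sstar pstar : Fin N → ℝ)
    (hp : ∀ i, 0 < pstar i ∧ pstar i < 1)
    (hg : gfun B lam δ α sstar pstar = 0)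
    (M : Matrix (Fin N) (Fin N) ℝ)
    (hM : M = Matrix.diagonal (fun i => α i * sstar i + δ i + lam i + B.mulVec pstar i)
      - Matrix.diagonal (fun i => 1 - pstar i) * B) :
    IsUnit M ∧ (∀ i j, 0 ≤ M⁻¹ i j) ∧
    (∀ μ ∈ spectrum ℂ (M.map Complex.ofReal), 0 < μ.re) := by
  have hpos : ∀ i, 0 < pstar i := fun i => (hp i).1
  have hZ : M.IsZMatrix :=
    hM ▸ isZMatrix_diagonal_sub_diagonal_mul _ (fun i => sub_nonneg.mpr (hp i).2.le) hBnn
  have hMp : ∀ i, 0 < (M *ᵥ pstar) i := by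
    rw [hM, mulVec_eq_of_gfun_eq_zero hg]
    exact fun i =>
      add_pos_of_nonneg_of_pos (hlam i) (mul_pos (hpos i) (hBirr.mulVec_pos hBnn hpos i))
  exact ⟨hZ.isUnit hpos hMp, hZ.inv_nonneg hpos hMp, fun μ => hZ.re_pos_of_mem_spectrum hpos hMp⟩

theorem statement13 {N : ℕ} (hN : 2 ≤ N)
    (B : Matrix (Fin N) (Fin N) ℝ) (hBnn : ∀ i j, 0 ≤ B i j) (hBirr : MatIrred B)
    (lam δ α : Fin N → ℝ)
    (hlam : ∀ i, 0 ≤ lam i) (hlam0 : lam ≠ 0)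
    (hδ : ∀ i, 0 < δ i) (hα : ∀ i, 0 < α i)
    (sstar pstar : Fin N → ℝ)
    (hs : ∀ i, 0 ≤ sstar i) (hp : ∀ i, 0 < pstar i ∧ pstar i < 1)
    (hg : gfun B lam δ α sstar pstar = 0)
    (M : Matrix (Fin N) (Fin N) ℝ)
    (hM : M = Matrix.diagonal (fun i => α i * sstar i + δ i + lam i + B.mulVec pstar i)
      - Matrix.diagonal (fun i => 1 - pstar i) * B) :
    IsUnit M ∧ (∀ i j, 0 ≤ M⁻¹ i j) ∧
    (∀ μ ∈ spectrum ℂ (M.map Complex.ofReal), 0 < μ.re) :=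
  statement13_general B hBnn hBirr lam δ α hlam sstar pstar hp hg M hM
end
end

section
/- (i) If the spectral radius of diag(δ)^{-1}B is at most 1, then s = 0 minimizes s ↦ w(s) + cᵀp_se(s) over {s ∈ ℝ^N : s ≥ 0}, i.e., w(0) + cᵀp_se(0) ≤ w(s) + cᵀp_se(s) for all s ≥ 0. (ii) If the spectral radius of diag(δ)^{-1}B is greater than 1, then every minimizer s* ≥ 0 of s ↦ w(s) + cᵀp_se(s) satisfies ρ(s*) ≥ 1, where ρ(s) is the spectral radius of diag(α∘s + δ)^{-1}B. -/
noncomputable section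

open Matrix

/-- `ρ(s)`: the spectral radius of `diag(α∘s + δ)⁻¹ B`. -/
def rhoS {N : ℕ} (B : Matrix (Fin N) (Fin N) ℝ) (α δ : Fin N → ℝ)
    (s : Fin N → ℝ) : ℝ :=
  specRad (Matrix.diagonal (fun i => (α i * s i + δ i)⁻¹) * B)

/-! For (i), `ρ(0) ≤ 1` forces `p_se(0) = 0`, and `w` is increasing while the cost term is
nonnegative. For (ii), suppose `ρ(s*) < 1`. For `0 < t ≤ 1` one has
`diag(α∘(t s) + δ)⁻¹ B ≤ t⁻¹ diag(α∘s + δ)⁻¹ B` entrywise, and the spectral radius is monotone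
on nonnegative matrices, so `ρ(t s*) ≤ ρ(s*) / t < 1` for `t = (1 + ρ(s*)) / 2`. Then the
steady states at `s*` and `t s*` both vanish, while `w(t s*) < w(s*)` because `s* ≠ 0`
(as `ρ(0) > 1`): `s*` is not a minimizer. -/

open scoped ENNReal Pointwise

attribute [local instance] Matrix.linftyOpNormedAddCommGroup Matrix.linftyOpNormedRing
  Matrix.linftyOpNormedAlgebra

namespace Matrix

variable {m n : Type*} [Fintype m] [Fintype n]

lemma pow_apply_mono [DecidableEq n] {A C : Matrix n n ℝ} (hA : ∀ i j, 0 ≤ A i j)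
    (hAC : ∀ i j, A i j ≤ C i j) (k : ℕ) (i j : n) :
    0 ≤ (A ^ k) i j ∧ (A ^ k) i j ≤ (C ^ k) i j := by
  induction k generalizing j with
  | zero => by_cases h : i = j <;> simp [h]
  | succ k ih =>
    simp only [pow_succ, mul_apply]
    exact ⟨Finset.sum_nonneg fun l _ => mul_nonneg (ih l).1 (hA l j),
      Finset.sum_le_sum fun l _ =>
        mul_le_mul (ih l).2 (hAC l j) (hA l j) ((ih l).1.trans (ih l).2)⟩

lemma linfty_opNNNorm_mono {A C : Matrix m n ℝ} (hA : ∀ i j, 0 ≤ A i j)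
    (hAC : ∀ i j, A i j ≤ C i j) : ‖A‖₊ ≤ ‖C‖₊ := by
  simp only [linfty_opNNNorm_def]
  refine Finset.sup_mono_fun fun i _ => Finset.sum_le_sum fun j _ => ?_
  rw [← NNReal.coe_le_coe, coe_nnnorm, coe_nnnorm, Real.norm_of_nonneg (hA i j),
    Real.norm_of_nonneg ((hA i j).trans (hAC i j))]
  exact hAC i j

lemma linfty_opNNNorm_map_ofReal (A : Matrix m n ℝ) :
    ‖A.map Complex.ofReal‖₊ = ‖A‖₊ := by
  simp only [linfty_opNNNorm_def, map_apply, Complex.nnnorm_real]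

/-- Gelfand's formula transfers the entrywise bound on the powers to the spectral radii. -/
lemma spectralRadius_map_ofReal_mono [DecidableEq n] {A C : Matrix n n ℝ}
    (hA : ∀ i j, 0 ≤ A i j) (hAC : ∀ i j, A i j ≤ C i j) :
    spectralRadius ℂ (A.map Complex.ofReal) ≤ spectralRadius ℂ (C.map Complex.ofReal) := by
  have hpow (k : ℕ) : ‖A.map Complex.ofReal ^ k‖₊ ≤ ‖C.map Complex.ofReal ^ k‖₊ := by
    have hmap (M : Matrix n n ℝ) :
        M.map Complex.ofReal ^ k = (M ^ k).map Complex.ofReal :=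
      (map_pow Complex.ofRealHom.mapMatrix M k).symm
    rw [hmap, hmap, linfty_opNNNorm_map_ofReal, linfty_opNNNorm_map_ofReal]
    exact linfty_opNNNorm_mono (fun i j => (pow_apply_mono hA hAC k i j).1)
      (fun i j => (pow_apply_mono hA hAC k i j).2)
  exact le_of_tendsto_of_tendsto'
    (spectrum.pow_nnnorm_pow_one_div_tendsto_nhds_spectralRadius _)
    (spectrum.pow_nnnorm_pow_one_div_tendsto_nhds_spectralRadius _) fun k =>
      ENNReal.rpow_le_rpow (ENNReal.coe_le_coe.mpr (hpow k)) (by positivity)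

end Matrix

section

variable {N : ℕ}

lemma specRad_nonneg (A : Matrix (Fin N) (Fin N) ℝ) : 0 ≤ specRad A :=
  Real.sSup_nonneg (by rintro _ ⟨μ, -, rfl⟩; exact norm_nonneg μ)

lemma norm_le_specRad (A : Matrix (Fin N) (Fin N) ℝ) {μ : ℂ}
    (hμ : μ ∈ spectrum ℂ (A.map Complex.ofReal)) : ‖μ‖ ≤ specRad A :=
  le_csSup ((spectrum.isCompact _).image continuous_norm).bddAbove ⟨μ, hμ, rfl⟩

lemma spectralRadius_le_ofReal_specRad (A : Matrix (Fin N) (Fin N) ℝ) :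
    spectralRadius ℂ (A.map Complex.ofReal) ≤ ENNReal.ofReal (specRad A) :=
  iSup₂_le fun μ hμ => by
    rw [← enorm_eq_nnnorm, ← ofReal_norm]
    exact ENNReal.ofReal_le_ofReal (norm_le_specRad A hμ)

lemma specRad_mono {A C : Matrix (Fin N) (Fin N) ℝ} (hA : ∀ i j, 0 ≤ A i j)
    (hAC : ∀ i j, A i j ≤ C i j) : specRad A ≤ specRad C := by
  refine Real.sSup_le ?_ (specRad_nonneg C)
  rintro _ ⟨μ, hμ, rfl⟩
  have h : ENNReal.ofReal ‖μ‖ ≤ ENNReal.ofReal (specRad C) :=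
    calc ENNReal.ofReal ‖μ‖ = ‖μ‖₊ := by rw [ofReal_norm, enorm_eq_nnnorm]
      _ ≤ spectralRadius ℂ (A.map Complex.ofReal) :=
        le_iSup₂ (f := fun μ _ => (‖μ‖₊ : ℝ≥0∞)) μ hμ
      _ ≤ spectralRadius ℂ (C.map Complex.ofReal) :=
        Matrix.spectralRadius_map_ofReal_mono hA hAC
      _ ≤ ENNReal.ofReal (specRad C) := spectralRadius_le_ofReal_specRad C
  exact (ENNReal.ofReal_le_ofReal_iff (specRad_nonneg C)).mp h

lemma specRad_smul (A : Matrix (Fin N) (Fin N) ℝ) {r : ℝ} (hr : 0 < r) :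
    specRad (r • A) = r * specRad A := by
  have hmap : (r • A).map Complex.ofReal =
      Units.mk0 (r : ℂ) (by exact_mod_cast hr.ne') • A.map Complex.ofReal := by
    ext i j; simp
  have himage : (fun μ : ℂ => ‖μ‖) '' spectrum ℂ ((r • A).map Complex.ofReal) =
      r • (fun μ : ℂ => ‖μ‖) '' spectrum ℂ (A.map Complex.ofReal) := by
    rw [hmap, spectrum.unit_smul_eq_smul, ← Set.image_smul, ← Set.image_smul,
      Set.image_image, Set.image_image]
    congr 1 with μ
    simp [hr.le]
  rw [specRad, himage, Real.sSup_smul_of_nonneg hr.le, smul_eq_mul, specRad]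

variable {B : Matrix (Fin N) (Fin N) ℝ} {α δ : Fin N → ℝ}

lemma rhoS_zero : rhoS B α δ 0 = specRad (Matrix.diagonal (fun i => (δ i)⁻¹) * B) := by
  simp [rhoS]

lemma rhoS_smul_le (hB : ∀ i j, 0 ≤ B i j) (hδ : ∀ i, 0 < δ i) (hα : ∀ i, 0 ≤ α i)
    {s : Fin N → ℝ} (hs : 0 ≤ s) {t : ℝ} (ht₀ : 0 < t) (ht₁ : t ≤ 1) :
    rhoS B α δ (t • s) ≤ t⁻¹ * rhoS B α δ s := by
  unfold rhoS
  rw [← specRad_smul _ (inv_pos.mpr ht₀)]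
  have hden (i : Fin N) : t * (α i * s i + δ i) ≤ α i * (t * s i) + δ i := by
    nlinarith [hδ i]
  have hpos (i : Fin N) : 0 < t * (α i * s i + δ i) :=
    mul_pos ht₀ (add_pos_of_nonneg_of_pos (mul_nonneg (hα i) (hs i)) (hδ i))
  refine specRad_mono (fun i j => ?_) (fun i j => ?_) <;>
    simp only [diagonal_mul, Matrix.smul_apply, Pi.smul_apply, smul_eq_mul]
  · exact mul_nonneg (inv_nonneg.mpr ((hpos i).le.trans (hden i))) (hB i j)
  · calc (α i * (t * s i) + δ i)⁻¹ * B i j ≤ (t * (α i * s i + δ i))⁻¹ * B i j :=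
          mul_le_mul_of_nonneg_right (inv_anti₀ (hpos i) (hden i)) (hB i j)
      _ = t⁻¹ * ((α i * s i + δ i)⁻¹ * B i j) := by rw [mul_inv, mul_assoc]

lemma exists_rhoS_smul_lt_one (hB : ∀ i j, 0 ≤ B i j) (hδ : ∀ i, 0 < δ i)
    (hα : ∀ i, 0 ≤ α i) {s : Fin N → ℝ} (hs : 0 ≤ s) (hρ : rhoS B α δ s < 1) :
    ∃ t ∈ Set.Ioo (0 : ℝ) 1, rhoS B α δ (t • s) < 1 := by
  set ρ := rhoS B α δ s
  have hρ₀ : 0 ≤ ρ := specRad_nonneg _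
  refine ⟨(1 + ρ) / 2, ⟨by linarith, by linarith⟩, ?_⟩
  calc rhoS B α δ (((1 + ρ) / 2) • s) ≤ ((1 + ρ) / 2)⁻¹ * ρ :=
        rhoS_smul_le hB hδ hα hs (by linarith) (by linarith)
    _ < 1 := by rw [inv_mul_lt_one₀ (by linarith)]; linarith

end

theorem statement14_general {N : ℕ}
    (B : Matrix (Fin N) (Fin N) ℝ) (hBnn : ∀ i j, 0 ≤ B i j)
    (δ α : Fin N → ℝ) (hδ : ∀ i, 0 < δ i) (hα : ∀ i, 0 < α i)
    (w : (Fin N → ℝ) → ℝ)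
    (hwmono : ∀ s s' : Fin N → ℝ, s ≤ s' → s ≠ s' → w s < w s')
    (c : Fin N → ℝ) (hc : ∀ i, 0 < c i)
    (pse : (Fin N → ℝ) → (Fin N → ℝ))
    (hpse_range : ∀ s : Fin N → ℝ, 0 ≤ s → ∀ i, 0 ≤ pse s i ∧ pse s i ≤ 1)
    (hpse_zero : ∀ s : Fin N → ℝ, 0 ≤ s → rhoS B α δ s ≤ 1 → pse s = 0) :
    (specRad (Matrix.diagonal (fun i => (δ i)⁻¹) * B) ≤ 1 →
      ∀ s : Fin N → ℝ, 0 ≤ s →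
        w 0 + ∑ i, c i * pse 0 i ≤ w s + ∑ i, c i * pse s i) ∧
    (1 < specRad (Matrix.diagonal (fun i => (δ i)⁻¹) * B) →
      ∀ sstar : Fin N → ℝ, 0 ≤ sstar →
        (∀ s : Fin N → ℝ, 0 ≤ s →
          w sstar + ∑ i, c i * pse sstar i ≤ w s + ∑ i, c i * pse s i) →
        1 ≤ rhoS B α δ sstar) := by
  refine ⟨fun hρ₀ s hs => ?_, fun hρ₀ sstar hsstar hmin => ?_⟩
  · have hw : w 0 ≤ w s := (eq_or_ne 0 s).elim (fun h => h ▸ le_rfl) (hwmono 0 s hs · |>.le)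
    have hcost : 0 ≤ ∑ i, c i * pse s i :=
      Finset.sum_nonneg fun i _ => mul_nonneg (hc i).le (hpse_range s hs i).1
    rw [hpse_zero 0 le_rfl (rhoS_zero.trans_le hρ₀)]
    simpa using add_le_add hw hcost
  · by_contra! hρ
    have hne : sstar ≠ 0 := by rintro rfl; linarith [rhoS_zero (B := B) (α := α) (δ := δ)]
    obtain ⟨t, ⟨ht₀, ht₁⟩, hρt⟩ :=
      exists_rhoS_smul_lt_one hBnn hδ (fun i => (hα i).le) hsstar hρ
    have hts : 0 ≤ t • sstar := smul_nonneg ht₀.le hsstar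
    have hlt : w (t • sstar) < w sstar :=
      hwmono _ _ (smul_le_of_le_one_left hsstar ht₁.le) fun h =>
        ht₁.ne (smul_left_injective ℝ hne (h.trans (one_smul ℝ sstar).symm))
    have hcomp := hmin _ hts
    simp only [hpse_zero _ hts hρt.le, hpse_zero _ hsstar hρ.le, Pi.zero_apply, mul_zero,
      Finset.sum_const_zero, add_zero] at hcomp
    exact hlt.not_ge hcomp

theorem statement14 {N : ℕ} (hN : 2 ≤ N)
    (B : Matrix (Fin N) (Fin N) ℝ) (hBnn : ∀ i j, 0 ≤ B i j) (hBirr : MatIrred B)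
    (δ α : Fin N → ℝ) (hδ : ∀ i, 0 < δ i) (hα : ∀ i, 0 < α i)
    (w : (Fin N → ℝ) → ℝ) (hwcont : Continuous w)
    (hwconv : ConvexOn ℝ Set.univ w)
    (hwmono : ∀ s s' : Fin N → ℝ, s ≤ s' → s ≠ s' → w s < w s')
    (c : Fin N → ℝ) (hc : ∀ i, 0 < c i)
    (pse : (Fin N → ℝ) → (Fin N → ℝ))
    (hpse_range : ∀ s : Fin N → ℝ, 0 ≤ s → ∀ i, 0 ≤ pse s i ∧ pse s i ≤ 1)
    (hpse_zero : ∀ s : Fin N → ℝ, 0 ≤ s → rhoS B α δ s ≤ 1 → pse s = 0)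
    (hpse_pos : ∀ s : Fin N → ℝ, 0 ≤ s → 1 < rhoS B α δ s →
      (∀ i, 0 < pse s i) ∧
      (∀ i, (1 - pse s i) * B.mulVec (pse s) i = (α i * s i + δ i) * pse s i)) :
    (specRad (Matrix.diagonal (fun i => (δ i)⁻¹) * B) ≤ 1 →
      ∀ s : Fin N → ℝ, 0 ≤ s →
        w 0 + ∑ i, c i * pse 0 i ≤ w s + ∑ i, c i * pse s i) ∧
    (1 < specRad (Matrix.diagonal (fun i => (δ i)⁻¹) * B) →
      ∀ sstar : Fin N → ℝ, 0 ≤ sstar →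
        (∀ s : Fin N → ℝ, 0 ≤ s →
          w sstar + ∑ i, c i * pse sstar i ≤ w s + ∑ i, c i * pse s i) →
        1 ≤ rhoS B α δ sstar) :=
  statement14_general B hBnn δ α hδ hα w hwmono c hc pse hpse_range hpse_zero
end
end

section
/- Assume the spectral radius of diag(δ)^{-1}B is greater than 1, w(0) = 0, and 0 < C* < ∞. Let ε ∈ (0, C*), C := C* − ε, and let (s_L, p_L, y_L, U_L) be a feasible point of problem (P_R3)(C) attaining f_L(C). Then: if w(s_L) < C, one has f_L* = f_L(C) ≤ f_0*; and if w(s_L) = C, one has C* − f_0* ≤ ε + ε·(f_L(0) − f_L*)/C*. -/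
/-!
With slack in the budget, a minimiser of the convex relaxation (P_R3)(C) is a local, hence by
convexity a global, minimiser over all budgets: a better point of larger cost could be mixed
with it, staying within budget and improving the objective. The relaxation lower-bounds the
true cost `w s + cᵀ p_se(s)`: an endemic state `p = p_se(s)` gives a feasible point with
`y = -log p`, and when `ρ(s) ≤ 1` a weak Perron–Frobenius vector `q > 0` with
`B q ≤ (α∘s + δ)∘q` gives feasible points `σ q` of arbitrarily small cost. That vector is a limit
point, as `r → 1`, of the normalised Neumann sums `∑ rⁿ Aⁿ 1` (convergent since the spectral
radius is at most `1`), made positive by irreducibility.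

When the budget binds, `f_L(C) ≥ w(s_L) = C`, and every `s` either has `ρ(s) ≤ 1` (so
`w(s) ≥ C*`), or exceeds the budget, or gives a feasible point of (P_R3)(C); hence
`f_0* ≥ C = C* - ε`; the remaining term is nonnegative because `f_L(0) ≥ f_L*`.
-/

noncomputable section

open Matrix

/-- Feasibility for the convex relaxation (P_R3) with budget `C`. -/
def FeasPR3 {N : ℕ} (w : (Fin N → ℝ) → ℝ) (B : Matrix (Fin N) (Fin N) ℝ)
    (α δ : Fin N → ℝ) (C : ℝ)
    (s p y : Fin N → ℝ) (U : Matrix (Fin N) (Fin N) ℝ) : Prop :=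
  (∀ i, 0 ≤ s i) ∧ (∀ i, 0 ≤ y i) ∧ w s ≤ C ∧
  (∀ i, ∑ j, U i j = B.mulVec p i + α i * s i + δ i) ∧
  (∀ i, Real.exp (-(y i)) ≤ p i) ∧
  (∀ i j, Real.exp (y i) * B i j * Real.exp (-(y j)) ≤ U i j)

open scoped NNReal ENNReal
open Filter Topology

theorem spectrum.summable_smul_pow_of_lt_inv_spectralRadius {A : Type*} [NormedRing A]
    [NormedAlgebra ℂ A] [CompleteSpace A] (a : A) {z : ℂ}
    (hz : (‖z‖₊ : ℝ≥0∞) < (spectralRadius ℂ a)⁻¹) :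
    Summable (fun n : ℕ => z ^ n • a ^ n) := by
  obtain ⟨r, hzr, hr⟩ := ENNReal.lt_iff_exists_nnreal_btwn.mp hz
  have hzr' : ‖z‖₊ < r := by exact_mod_cast hzr
  have H := (spectrum.differentiableOn_inverse_one_sub_smul hr).hasFPowerSeriesOnBall
    (pos_of_gt hzr')
  have H' := (spectrum.hasFPowerSeriesOnBall_inverse_one_sub_smul ℂ a).exchange_radius H
  have := H'.hasSum (y := z) (by simpa [Metric.eball_coe, ← NNReal.coe_lt_coe] using hzr)
  exact ⟨_, by simpa using this⟩

section

-- The spectrum does not depend on the norm; the `L∞` operator norm just makes square matrices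
-- a complex Banach algebra.
attribute [local instance] Matrix.linftyOpNormedRing Matrix.linftyOpNormedAlgebra

theorem Matrix.spectralRadius_map_ofReal_le_specRad {N : ℕ} (A : Matrix (Fin N) (Fin N) ℝ) :
    spectralRadius ℂ (A.map Complex.ofReal) ≤ ENNReal.ofReal (specRad A) := by
  refine iSup₂_le fun μ hμ => ?_
  rw [← ENNReal.ofReal_coe_nnreal, coe_nnnorm]
  exact ENNReal.ofReal_le_ofReal <| le_csSup
    ((Matrix.finite_spectrum _).image _).bddAbove (Set.mem_image_of_mem _ hμ)

theorem Matrix.summable_smul_pow_mulVec_of_specRad_le_one {N : ℕ} (A : Matrix (Fin N) (Fin N) ℝ)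
    (hA : specRad A ≤ 1) {r : ℝ} (hr : |r| < 1) (v : Fin N → ℝ) :
    Summable (fun n : ℕ => r ^ n • (A ^ n *ᵥ v)) := by
  have hρ : spectralRadius ℂ (A.map Complex.ofReal) ≤ 1 :=
    (A.spectralRadius_map_ofReal_le_specRad).trans (by simpa using ENNReal.ofReal_le_ofReal hA)
  have hz : (‖(r : ℂ)‖₊ : ℝ≥0∞) < (spectralRadius ℂ (A.map Complex.ofReal))⁻¹ := by
    refine lt_of_lt_of_le ?_ (ENNReal.one_le_inv.mpr hρ)
    have : ‖(r : ℂ)‖₊ < 1 := by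
      rw [← NNReal.coe_lt_coe, coe_nnnorm, Complex.norm_real, Real.norm_eq_abs]; simpa using hr
    exact_mod_cast this
  have hs := (spectrum.summable_smul_pow_of_lt_inv_spectralRadius _ hz).map
    (Matrix.mulVec.addMonoidHomLeft (Complex.ofReal ∘ v))
    (Continuous.matrix_mulVec continuous_id continuous_const)
  refine Pi.summable.mpr fun i => Complex.summable_ofReal.mp ?_
  convert Pi.summable.mp hs i using 2 with n
  have hpow : A.map Complex.ofReal ^ n = (A ^ n).map Complex.ofRealHom :=
    (Matrix.map_pow A Complex.ofRealHom n).symm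
  simp only [Function.comp_apply, Matrix.mulVec.addMonoidHomLeft, AddMonoidHom.coe_mk,
    ZeroHom.coe_mk, Matrix.smul_mulVec, hpow, Pi.smul_apply, smul_eq_mul, Complex.ofReal_mul,
    Complex.ofReal_pow]
  congr 1
  exact RingHom.map_mulVec Complex.ofRealHom _ _ _

end

theorem Matrix.pow_apply_eq_zero_of_forall_apply_eq_zero {ι R : Type*} [Fintype ι]
    [DecidableEq ι] [Semiring R] {B : Matrix ι ι R} {S : Set ι}
    (hS : ∀ i ∉ S, ∀ l ∈ S, B i l = 0) (k : ℕ) :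
    ∀ i ∉ S, ∀ j ∈ S, (B ^ k) i j = 0 := by
  induction k with
  | zero =>
    intro i hi j hj
    exact Matrix.one_apply_ne fun hij => hi (hij ▸ hj)
  | succ k ih =>
    intro i hi j hj
    rw [pow_succ, Matrix.mul_apply]
    refine Finset.sum_eq_zero fun l _ => ?_
    by_cases hl : l ∈ S
    · rw [ih i hi l hl, zero_mul]
    · rw [hS l hl j hj, mul_zero]

theorem MatIrred.pos_of_mulVec_le {N : ℕ} {B : Matrix (Fin N) (Fin N) ℝ}
    (hBnn : ∀ i j, 0 ≤ B i j) (hB : MatIrred B) {q d : Fin N → ℝ} (hq : 0 ≤ q) (hq0 : q ≠ 0)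
    (hBq : ∀ i, (B *ᵥ q) i ≤ d i * q i) (i : Fin N) : 0 < q i := by
  obtain ⟨j, hj⟩ : ∃ j, 0 < q j := by
    by_contra! h
    exact hq0 (funext fun j => le_antisymm (h j) (hq j))
  by_contra! hi
  have hS : ∀ k ∉ {l | 0 < q l}, ∀ l ∈ {l | 0 < q l}, B k l = 0 := by
    intro k hk l hl
    have hqk : q k = 0 := le_antisymm (not_lt.mp hk) (hq k)
    have hsum : ∑ m, B k m * q m = 0 :=
      le_antisymm (by simpa [hqk, Matrix.mulVec, dotProduct] using hBq k)
        (Finset.sum_nonneg fun m _ => mul_nonneg (hBnn k m) (hq m))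
    have := (Finset.sum_eq_zero_iff_of_nonneg fun m _ => mul_nonneg (hBnn k m) (hq m)).mp hsum l
      (Finset.mem_univ l)
    exact (mul_eq_zero.mp this).resolve_right (ne_of_gt hl)
  obtain ⟨k, -, hk⟩ := hB i j
  exact hk.ne' (Matrix.pow_apply_eq_zero_of_forall_apply_eq_zero hS k i (not_lt.mpr hi) j hj)

theorem Matrix.mulVec_nonneg_of_nonneg {ι : Type*} [Fintype ι] {A : Matrix ι ι ℝ}
    (hA : ∀ i j, 0 ≤ A i j) {x : ι → ℝ} (hx : 0 ≤ x) : 0 ≤ A *ᵥ x :=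
  fun i => dotProduct_nonneg_of_nonneg (hA i) hx

theorem Matrix.pow_mulVec_nonneg_of_nonneg {ι : Type*} [Fintype ι] [DecidableEq ι]
    {A : Matrix ι ι ℝ} (hA : ∀ i j, 0 ≤ A i j) {x : ι → ℝ} (hx : 0 ≤ x) (n : ℕ) :
    0 ≤ A ^ n *ᵥ x := by
  induction n with
  | zero => simpa using hx
  | succ n ih =>
    rw [pow_succ', ← Matrix.mulVec_mulVec]
    exact Matrix.mulVec_nonneg_of_nonneg hA ih

theorem Matrix.exists_mem_stdSimplex_smul_mulVec_le {N : ℕ} [Nonempty (Fin N)]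
    {A : Matrix (Fin N) (Fin N) ℝ} (hAnn : ∀ i j, 0 ≤ A i j) (hA : specRad A ≤ 1)
    {r : ℝ} (hr0 : 0 ≤ r) (hr1 : r < 1) :
    ∃ u ∈ stdSimplex ℝ (Fin N), r • (A *ᵥ u) ≤ u := by
  set f : ℕ → Fin N → ℝ := fun n => r ^ n • (A ^ n *ᵥ 1)
  have hf : Summable f :=
    A.summable_smul_pow_mulVec_of_specRad_le_one hA (by rwa [abs_of_nonneg hr0]) 1
  set v := ∑' n, f n
  have hf0 : ∀ n, 0 ≤ f n := fun n =>
    smul_nonneg (pow_nonneg hr0 n) (Matrix.pow_mulVec_nonneg_of_nonneg hAnn zero_le_one n)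
  have hshift : ∀ n, f (n + 1) = Matrix.mulVecLin (r • A) (f n) := fun n => by
    simp only [f, Matrix.mulVecLin_apply, pow_succ', ← Matrix.mulVec_mulVec, Matrix.mulVec_smul,
      Matrix.smul_mulVec, mul_smul]
    exact smul_comm r (r ^ n) _
  have hv : v = 1 + r • (A *ᵥ v) := by
    have htail := (hf.hasSum.map (Matrix.mulVecLin (r • A))
      (Continuous.matrix_mulVec continuous_const continuous_id)).tsum_eq
    simp only [Function.comp_def, ← hshift, Matrix.mulVecLin_apply] at htail
    have h0 : f 0 = 1 := by simp [f]
    rw [← Matrix.smul_mulVec, ← htail, ← h0]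
    exact hf.tsum_eq_zero_add
  have hv0 : 0 ≤ v := tsum_nonneg hf0
  have hAv : 0 ≤ r • (A *ᵥ v) := smul_nonneg hr0 (Matrix.mulVec_nonneg_of_nonneg hAnn hv0)
  have hv1 : 1 ≤ v := by rw [hv]; exact le_add_of_nonneg_right hAv
  have hS : 0 < ∑ i, v i :=
    Finset.sum_pos (fun i _ => one_pos.trans_le (hv1 i)) Finset.univ_nonempty
  refine ⟨(∑ i, v i)⁻¹ • v, ⟨fun i => ?_, ?_⟩, ?_⟩
  · exact mul_nonneg (inv_nonneg.mpr hS.le) (hv0 i)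
  · simp [← Finset.mul_sum, hS.ne']
  · rw [Matrix.mulVec_smul, smul_comm]
    refine smul_le_smul_of_nonneg_left ?_ (inv_nonneg.mpr hS.le)
    calc r • (A *ᵥ v) ≤ 1 + r • (A *ᵥ v) := le_add_of_nonneg_left zero_le_one
      _ = v := hv.symm

theorem Matrix.exists_mem_stdSimplex_mulVec_le {N : ℕ} [Nonempty (Fin N)]
    {A : Matrix (Fin N) (Fin N) ℝ} (hAnn : ∀ i j, 0 ≤ A i j) (hA : specRad A ≤ 1) :
    ∃ u ∈ stdSimplex ℝ (Fin N), A *ᵥ u ≤ u := by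
  set r : ℕ → ℝ := fun n => n / (n + 1)
  have hr0 : ∀ n, 0 ≤ r n := fun n => by positivity
  have hr1 : ∀ n, r n < 1 := fun n => (div_lt_one (by positivity)).mpr (lt_add_one _)
  have hr : Tendsto r atTop (𝓝 1) := tendsto_natCast_div_add_atTop 1
  choose u hu hle using fun n => A.exists_mem_stdSimplex_smul_mulVec_le hAnn hA (hr0 n) (hr1 n)
  obtain ⟨u', hu', φ, hφ, hlim⟩ := (isCompact_stdSimplex ℝ (Fin N)).tendsto_subseq hu
  refine ⟨u', hu', le_of_tendsto_of_tendsto' ?_ hlim fun n => hle (φ n)⟩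
  simpa using (hr.comp hφ.tendsto_atTop).smul
    (((Continuous.matrix_mulVec continuous_const continuous_id).tendsto u').comp hlim)

theorem MatIrred.exists_pos_mulVec_le {N : ℕ} {B : Matrix (Fin N) (Fin N) ℝ}
    (hBnn : ∀ i j, 0 ≤ B i j) (hB : MatIrred B) {d : Fin N → ℝ} (hd : ∀ i, 0 < d i)
    (hρ : specRad (Matrix.diagonal (fun i => (d i)⁻¹) * B) ≤ 1) :
    ∃ q : Fin N → ℝ, (∀ i, 0 < q i) ∧ ∀ i, (B *ᵥ q) i ≤ d i * q i := by
  rcases isEmpty_or_nonempty (Fin N) with hN | hN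
  · exact ⟨0, isEmptyElim, isEmptyElim⟩
  have hAnn : ∀ i j, 0 ≤ (Matrix.diagonal (fun i => (d i)⁻¹) * B) i j := fun i j => by
    rw [Matrix.diagonal_mul]; exact mul_nonneg (inv_nonneg.mpr (hd i).le) (hBnn i j)
  obtain ⟨u, ⟨hu0, hu1⟩, hle⟩ := Matrix.exists_mem_stdSimplex_mulVec_le hAnn hρ
  have hBu : ∀ i, (B *ᵥ u) i ≤ d i * u i := fun i => by
    have := hle i
    rw [← Matrix.mulVec_mulVec, Matrix.mulVec_diagonal, inv_mul_le_iff₀ (hd i)] at this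
    exact this
  have hu : u ≠ 0 := by rintro rfl; simp at hu1
  exact ⟨u, hB.pos_of_mulVec_le hBnn hu0 hu hBu, hBu⟩

theorem Real.exp_mul_add_mul_le {a b : ℝ} (ha : 0 ≤ a) (hb : 0 ≤ b) (hab : a + b = 1)
    (x y : ℝ) : Real.exp (a * x + b * y) ≤ a * Real.exp x + b * Real.exp y := by
  simpa using convexOn_exp.2 (Set.mem_univ x) (Set.mem_univ y) ha hb hab

section Relaxation

variable {N : ℕ} {w : (Fin N → ℝ) → ℝ} {B : Matrix (Fin N) (Fin N) ℝ} {α δ c : Fin N → ℝ}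

theorem FeasPR3.with_budget {C C' : ℝ} {s p y : Fin N → ℝ} {U : Matrix (Fin N) (Fin N) ℝ}
    (h : FeasPR3 w B α δ C s p y U) (hC' : w s ≤ C') : FeasPR3 w B α δ C' s p y U :=
  ⟨h.1, h.2.1, hC', h.2.2.2⟩

theorem feasPR3_of_mulVec_le {C : ℝ} {s x : Fin N → ℝ} (hs : ∀ i, 0 ≤ s i)
    (hx0 : ∀ i, 0 < x i) (hx1 : ∀ i, x i ≤ 1)
    (hx : ∀ i, (B *ᵥ x) i ≤ x i * ((B *ᵥ x) i + α i * s i + δ i)) (hC : w s ≤ C) :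
    ∃ y U, FeasPR3 w B α δ C s x y U := by
  set y : Fin N → ℝ := fun i => -Real.log (x i)
  have hexp : ∀ i, Real.exp (-y i) = x i := fun i => by simp [y, Real.exp_log (hx0 i)]
  have hexp' : ∀ i, Real.exp (y i) = (x i)⁻¹ := fun i => by
    simp [y, Real.exp_neg, Real.exp_log (hx0 i)]
  set E : Matrix (Fin N) (Fin N) ℝ :=
    Matrix.of fun i j => Real.exp (y i) * B i j * Real.exp (-y j)
  have hE : ∀ i, ∑ j, E i j = (x i)⁻¹ * (B *ᵥ x) i := fun i => by
    simp only [E, Matrix.of_apply, hexp, hexp', Matrix.mulVec, dotProduct, Finset.mul_sum,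
      mul_assoc]
  set slack : Fin N → ℝ := fun i => (B *ᵥ x) i + α i * s i + δ i - ∑ j, E i j
  have hslack : ∀ i, 0 ≤ slack i := fun i => by
    simp only [slack, hE, sub_nonneg]
    rw [inv_mul_le_iff₀ (hx0 i)]
    exact hx i
  refine ⟨y, E + Matrix.diagonal slack,
    ⟨hs, fun i => ?_, hC, fun i => ?_, fun i => ?_, fun i j => ?_⟩⟩
  · exact neg_nonneg.mpr (Real.log_nonpos (hx0 i).le (hx1 i))
  · simp [Finset.sum_add_distrib, Matrix.diagonal_apply, slack]
  · rw [hexp]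
  · have : 0 ≤ Matrix.diagonal slack i j := by
      by_cases hij : i = j
      · simp [hij, hslack j]
      · simp [hij]
    simpa [E] using this

theorem FeasPR3.convex_combination (hwconv : ConvexOn ℝ Set.univ w) (hBnn : ∀ i j, 0 ≤ B i j)
    {C₁ C₂ a b : ℝ} {s₁ p₁ y₁ s₂ p₂ y₂ : Fin N → ℝ} {U₁ U₂ : Matrix (Fin N) (Fin N) ℝ}
    (h₁ : FeasPR3 w B α δ C₁ s₁ p₁ y₁ U₁) (h₂ : FeasPR3 w B α δ C₂ s₂ p₂ y₂ U₂)
    (ha : 0 ≤ a) (hb : 0 ≤ b) (hab : a + b = 1) :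
    FeasPR3 w B α δ (a * C₁ + b * C₂) (a • s₁ + b • s₂) (a • p₁ + b • p₂) (a • y₁ + b • y₂)
      (a • U₁ + b • U₂) := by
  obtain ⟨hs₁, hy₁, hw₁, hrow₁, hp₁, hU₁⟩ := h₁
  obtain ⟨hs₂, hy₂, hw₂, hrow₂, hp₂, hU₂⟩ := h₂
  refine ⟨fun i => ?_, fun i => ?_, ?_, fun i => ?_, fun i => ?_, fun i j => ?_⟩
  · simpa using add_nonneg (mul_nonneg ha (hs₁ i)) (mul_nonneg hb (hs₂ i))
  · simpa using add_nonneg (mul_nonneg ha (hy₁ i)) (mul_nonneg hb (hy₂ i))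
  · calc w (a • s₁ + b • s₂) ≤ a • w s₁ + b • w s₂ :=
          hwconv.2 (Set.mem_univ _) (Set.mem_univ _) ha hb hab
      _ ≤ a * C₁ + b * C₂ := by
          simp only [smul_eq_mul]; gcongr
  · simp only [Matrix.add_apply, Matrix.smul_apply, Finset.sum_add_distrib, smul_eq_mul,
      ← Finset.mul_sum, hrow₁, hrow₂, Matrix.mulVec_add, Matrix.mulVec_smul, Pi.add_apply,
      Pi.smul_apply]
    linear_combination δ i * hab
  · calc Real.exp (-(a • y₁ + b • y₂) i) = Real.exp (a * -y₁ i + b * -y₂ i) := by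
          simp only [Pi.add_apply, Pi.smul_apply, smul_eq_mul]; ring_nf
      _ ≤ a * Real.exp (-y₁ i) + b * Real.exp (-y₂ i) := Real.exp_mul_add_mul_le ha hb hab _ _
      _ ≤ (a • p₁ + b • p₂) i := by
          simp only [Pi.add_apply, Pi.smul_apply, smul_eq_mul]; gcongr <;> simp [hp₁, hp₂]
  · have hsplit : ∀ z : Fin N → ℝ,
        Real.exp (z i) * B i j * Real.exp (-z j) = B i j * Real.exp (z i - z j) := fun z => by
      rw [sub_eq_add_neg, Real.exp_add]; ring
    rw [hsplit]
    calc B i j * Real.exp ((a • y₁ + b • y₂) i - (a • y₁ + b • y₂) j)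
        = B i j * Real.exp (a * (y₁ i - y₁ j) + b * (y₂ i - y₂ j)) := by
          simp only [Pi.add_apply, Pi.smul_apply, smul_eq_mul]; ring_nf
      _ ≤ B i j * (a * Real.exp (y₁ i - y₁ j) + b * Real.exp (y₂ i - y₂ j)) :=
          mul_le_mul_of_nonneg_left (Real.exp_mul_add_mul_le ha hb hab _ _) (hBnn i j)
      _ = a * (B i j * Real.exp (y₁ i - y₁ j)) + b * (B i j * Real.exp (y₂ i - y₂ j)) := by ring
      _ ≤ (a • U₁ + b • U₂) i j := by
          rw [← hsplit, ← hsplit]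
          simp only [Matrix.add_apply, Matrix.smul_apply, smul_eq_mul]
          gcongr
          · exact hU₁ i j
          · exact hU₂ i j

-- `f_L(C)` is `sInf (relaxedValues w B α δ c C)`.
def relaxedValues (w : (Fin N → ℝ) → ℝ) (B : Matrix (Fin N) (Fin N) ℝ) (α δ c : Fin N → ℝ)
    (C : ℝ) : Set ℝ :=
  {v | ∃ (s p y : Fin N → ℝ) (U : Matrix (Fin N) (Fin N) ℝ),
    FeasPR3 w B α δ C s p y U ∧ v = w s + ∑ i, c i * p i}

theorem FeasPR3.sum_mul_nonneg {C : ℝ} {s p y : Fin N → ℝ} {U : Matrix (Fin N) (Fin N) ℝ}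
    (h : FeasPR3 w B α δ C s p y U) (hc : ∀ i, 0 ≤ c i) : 0 ≤ ∑ i, c i * p i :=
  Finset.sum_nonneg fun i _ => mul_nonneg (hc i) ((Real.exp_pos _).le.trans (h.2.2.2.2.1 i))

theorem relaxedValues_nonneg (hw : ∀ s, 0 ≤ s → 0 ≤ w s) (hc : ∀ i, 0 ≤ c i) {C v : ℝ}
    (hv : v ∈ relaxedValues w B α δ c C) : 0 ≤ v := by
  obtain ⟨s, p, y, U, h, rfl⟩ := hv
  exact add_nonneg (hw s h.1) (h.sum_mul_nonneg hc)

theorem sInf_relaxedValues_le (hw : ∀ s, 0 ≤ s → 0 ≤ w s) (hc : ∀ i, 0 ≤ c i) {C v : ℝ}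
    (hv : v ∈ relaxedValues w B α δ c C) : sInf (relaxedValues w B α δ c C) ≤ v :=
  csInf_le ⟨0, fun _ => relaxedValues_nonneg hw hc⟩ hv

theorem sInf_relaxedValues_nonneg (hw : ∀ s, 0 ≤ s → 0 ≤ w s) (hc : ∀ i, 0 ≤ c i) {C : ℝ} :
    0 ≤ sInf (relaxedValues w B α δ c C) :=
  Real.sInf_nonneg fun _ => relaxedValues_nonneg hw hc

theorem relaxedValues_nonempty (hδ : ∀ i, 0 ≤ δ i) {C : ℝ} (hC : w 0 ≤ C) :
    (relaxedValues w B α δ c C).Nonempty := by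
  obtain ⟨y, U, h⟩ := feasPR3_of_mulVec_le (B := B) (α := α) (δ := δ) (s := 0) (x := 1)
    (fun _ => le_rfl) (fun _ => one_pos) (fun _ => le_rfl) (fun i => by simpa using hδ i) hC
  exact ⟨_, 0, 1, y, U, h, rfl⟩

theorem mem_relaxedValues_of_endemic {C : ℝ} {s p : Fin N → ℝ} (hs : ∀ i, 0 ≤ s i)
    (hp0 : ∀ i, 0 < p i) (hp1 : ∀ i, p i ≤ 1)
    (hp : ∀ i, (1 - p i) * (B *ᵥ p) i = (α i * s i + δ i) * p i) (hC : w s ≤ C) :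
    w s + ∑ i, c i * p i ∈ relaxedValues w B α δ c C := by
  obtain ⟨y, U, h⟩ := feasPR3_of_mulVec_le (B := B) (α := α) (δ := δ) hs hp0 hp1
    (fun i => by linarith [hp i]) hC
  exact ⟨s, p, y, U, h, rfl⟩

theorem exists_mem_relaxedValues_le_add (hBnn : ∀ i j, 0 ≤ B i j) (hB : MatIrred B)
    (hα : ∀ i, 0 ≤ α i) (hδ : ∀ i, 0 < δ i) (hc : ∀ i, 0 ≤ c i) {s : Fin N → ℝ}
    (hs : ∀ i, 0 ≤ s i) (hρ : rhoS B α δ s ≤ 1) {γ : ℝ} (hγ : 0 < γ) :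
    ∃ v ∈ relaxedValues w B α δ c (w s), v ≤ w s + γ := by
  obtain ⟨q, hq0, hq⟩ := hB.exists_pos_mulVec_le hBnn
    (fun i => add_pos_of_nonneg_of_pos (mul_nonneg (hα i) (hs i)) (hδ i)) hρ
  have hQ : 0 ≤ ∑ i, q i := Finset.sum_nonneg fun i _ => (hq0 i).le
  have hcQ : 0 ≤ ∑ i, c i * q i := Finset.sum_nonneg fun i _ => mul_nonneg (hc i) (hq0 i).le
  set K := 1 + ∑ i, q i + ∑ i, c i * q i
  have hK : 0 < K := by linarith
  set σ := min 1 γ / K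
  have hσ : 0 < σ := div_pos (lt_min one_pos hγ) hK
  have hσK : σ * K = min 1 γ := div_mul_cancel₀ _ hK.ne'
  have hqK : ∀ i, q i ≤ K := fun i => by
    linarith [Finset.single_le_sum (fun j _ => (hq0 j).le) (Finset.mem_univ i)]
  have hBx : ∀ i, (B *ᵥ σ • q) i ≤ (σ • q) i * ((B *ᵥ σ • q) i + α i * s i + δ i) := fun i => by
    have h₁ : (B *ᵥ σ • q) i ≤ (α i * s i + δ i) * (σ • q) i := by
      simpa [Matrix.mulVec_smul, mul_left_comm σ] using mul_le_mul_of_nonneg_left (hq i) hσ.le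
    have h₂ : 0 ≤ (σ • q) i * (B *ᵥ σ • q) i :=
      mul_nonneg (by simpa using (mul_pos hσ (hq0 i)).le)
        (Matrix.mulVec_nonneg_of_nonneg hBnn (fun j => by simpa using (mul_pos hσ (hq0 j)).le) i)
    linarith
  obtain ⟨y, U, h⟩ := feasPR3_of_mulVec_le (x := σ • q) hs
    (fun i => by simpa using mul_pos hσ (hq0 i))
    (fun i => by
      simpa using (mul_le_mul_of_nonneg_left (hqK i) hσ.le).trans (hσK.trans_le (min_le_left _ _)))
    hBx le_rfl
  refine ⟨_, ⟨s, σ • q, y, U, h, rfl⟩, add_le_add le_rfl ?_⟩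
  calc ∑ i, c i * (σ • q) i = σ * ∑ i, c i * q i := by
        simp only [Pi.smul_apply, smul_eq_mul, Finset.mul_sum]
        exact Finset.sum_congr rfl fun i _ => by ring
    _ ≤ σ * K := by gcongr; linarith
    _ ≤ γ := hσK.trans_le (min_le_right _ _)

theorem objective_le_of_budget_lt (hwconv : ConvexOn ℝ Set.univ w) (hBnn : ∀ i j, 0 ≤ B i j)
    {C : ℝ} {sL pL yL : Fin N → ℝ} {UL : Matrix (Fin N) (Fin N) ℝ}
    (hL : FeasPR3 w B α δ C sL pL yL UL) (hslack : w sL < C)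
    (hopt : ∀ v ∈ relaxedValues w B α δ c C, w sL + ∑ i, c i * pL i ≤ v)
    {C' v : ℝ} (hv : v ∈ relaxedValues w B α δ c C') : w sL + ∑ i, c i * pL i ≤ v := by
  obtain ⟨s, p, y, U, h, rfl⟩ := hv
  by_cases hs : w s ≤ C
  · exact hopt _ ⟨s, p, y, U, h.with_budget hs, rfl⟩
  rw [not_le] at hs
  set θ := (C - w sL) / (w s - w sL)
  have hθ0 : 0 < θ := div_pos (by linarith) (by linarith)
  have hθ1 : θ ≤ 1 := (div_le_one (by linarith)).mpr (by linarith)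
  have hbudget : (1 - θ) * w sL + θ * w s = C := by
    have : θ * (w s - w sL) = C - w sL := div_mul_cancel₀ _ (by linarith)
    linarith
  have hcomb := (hL.with_budget le_rfl).convex_combination hwconv hBnn (h.with_budget le_rfl)
    (sub_nonneg.mpr hθ1) hθ0.le (sub_add_cancel 1 θ)
  have hw := hwconv.2 (Set.mem_univ sL) (Set.mem_univ s) (sub_nonneg.mpr hθ1) hθ0.le
    (sub_add_cancel 1 θ)
  have hle := hopt _ ⟨_, _, _, _, hcomb.with_budget (hw.trans hbudget.le), rfl⟩
  have hsum : ∑ i, c i * ((1 - θ) • pL + θ • p) i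
      = (1 - θ) * ∑ i, c i * pL i + θ * ∑ i, c i * p i := by
    simp only [Pi.add_apply, Pi.smul_apply, smul_eq_mul, Finset.mul_sum, ← Finset.sum_add_distrib]
    exact Finset.sum_congr rfl fun i _ => by ring
  rw [hsum] at hle
  simp only [smul_eq_mul] at hw
  have : θ * (w sL + ∑ i, c i * pL i) ≤ θ * (w s + ∑ i, c i * p i) := by linarith
  exact le_of_mul_le_mul_left this hθ0

theorem le_objective_pse (hBnn : ∀ i j, 0 ≤ B i j) (hB : MatIrred B) (hα : ∀ i, 0 ≤ α i)
    (hδ : ∀ i, 0 < δ i) (hc : ∀ i, 0 ≤ c i) {pse : (Fin N → ℝ) → (Fin N → ℝ)}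
    (hpse_range : ∀ s : Fin N → ℝ, 0 ≤ s → ∀ i, 0 ≤ pse s i ∧ pse s i ≤ 1)
    (hpse_zero : ∀ s : Fin N → ℝ, 0 ≤ s → rhoS B α δ s ≤ 1 → pse s = 0)
    (hpse_pos : ∀ s : Fin N → ℝ, 0 ≤ s → 1 < rhoS B α δ s →
      (∀ i, 0 < pse s i) ∧
      (∀ i, (1 - pse s i) * B.mulVec (pse s) i = (α i * s i + δ i) * pse s i))
    {m : ℝ} (hm : ∀ C, ∀ v ∈ relaxedValues w B α δ c C, m ≤ v) {s : Fin N → ℝ} (hs : 0 ≤ s) :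
    m ≤ w s + ∑ i, c i * pse s i := by
  rcases le_or_gt (rhoS B α δ s) 1 with hρ | hρ
  · simp only [hpse_zero s hs hρ, Pi.zero_apply, mul_zero, Finset.sum_const_zero, add_zero]
    refine le_of_forall_pos_le_add fun γ hγ => ?_
    obtain ⟨v, hv, hvle⟩ := exists_mem_relaxedValues_le_add hBnn hB hα hδ hc hs hρ hγ
    exact (hm _ v hv).trans hvle
  · obtain ⟨hpos, heq⟩ := hpse_pos s hs hρ
    exact hm _ _ (mem_relaxedValues_of_endemic hs hpos (fun i => (hpse_range s hs i).2) heq le_rfl)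

theorem le_objective_pse_of_le_budget {C : ℝ} {pse : (Fin N → ℝ) → (Fin N → ℝ)}
    (hc : ∀ i, 0 ≤ c i) (hpse_range : ∀ s : Fin N → ℝ, 0 ≤ s → ∀ i, 0 ≤ pse s i ∧ pse s i ≤ 1)
    (hpse_pos : ∀ s : Fin N → ℝ, 0 ≤ s → 1 < rhoS B α δ s →
      (∀ i, 0 < pse s i) ∧
      (∀ i, (1 - pse s i) * B.mulVec (pse s) i = (α i * s i + δ i) * pse s i))
    (hCρ : ∀ s : Fin N → ℝ, 0 ≤ s → rhoS B α δ s ≤ 1 → C ≤ w s)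
    (hCV : ∀ v ∈ relaxedValues w B α δ c C, C ≤ v) {s : Fin N → ℝ} (hs : 0 ≤ s) :
    C ≤ w s + ∑ i, c i * pse s i := by
  have hsum : 0 ≤ ∑ i, c i * pse s i :=
    Finset.sum_nonneg fun i _ => mul_nonneg (hc i) (hpse_range s hs i).1
  rcases le_or_gt (rhoS B α δ s) 1 with hρ | hρ
  · linarith [hCρ s hs hρ]
  rcases le_or_gt (w s) C with hC | hC
  · obtain ⟨hpos, heq⟩ := hpse_pos s hs hρ
    exact hCV _ (mem_relaxedValues_of_endemic hs hpos (fun i => (hpse_range s hs i).2) heq hC)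
  · linarith

end Relaxation

theorem statement16_general {N : ℕ}
    (B : Matrix (Fin N) (Fin N) ℝ) (hBnn : ∀ i j, 0 ≤ B i j) (hBirr : MatIrred B)
    (δ α : Fin N → ℝ) (hδ : ∀ i, 0 < δ i) (hα : ∀ i, 0 < α i)
    (w : (Fin N → ℝ) → ℝ)
    (hwconv : ConvexOn ℝ Set.univ w)
    (hwmono : ∀ s s' : Fin N → ℝ, s ≤ s' → s ≠ s' → w s < w s')
    (c : Fin N → ℝ) (hc : ∀ i, 0 < c i)
    (pse : (Fin N → ℝ) → (Fin N → ℝ))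
    (hpse_range : ∀ s : Fin N → ℝ, 0 ≤ s → ∀ i, 0 ≤ pse s i ∧ pse s i ≤ 1)
    (hpse_zero : ∀ s : Fin N → ℝ, 0 ≤ s → rhoS B α δ s ≤ 1 → pse s = 0)
    (hpse_pos : ∀ s : Fin N → ℝ, 0 ≤ s → 1 < rhoS B α δ s →
      (∀ i, 0 < pse s i) ∧
      (∀ i, (1 - pse s i) * B.mulVec (pse s) i = (α i * s i + δ i) * pse s i))
    (hw0 : w 0 = 0)
    (f0star : ℝ)
    (hf0star : f0star = sInf {v | ∃ s : Fin N → ℝ, 0 ≤ s ∧ v = w s + ∑ i, c i * pse s i})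
    (Cstar : ℝ)
    (hCstar : Cstar = sInf {v | ∃ s : Fin N → ℝ, 0 ≤ s ∧ rhoS B α δ s ≤ 1 ∧ v = w s})
    (hCstar_pos : 0 < Cstar)
    (fL : ℝ → ℝ)
    (hfL : ∀ C : ℝ, fL C = sInf {v | ∃ (s p y : Fin N → ℝ) (U : Matrix (Fin N) (Fin N) ℝ),
      FeasPR3 w B α δ C s p y U ∧ v = w s + ∑ i, c i * p i})
    (fLstar : ℝ) (hfLstar : fLstar = sInf (fL '' Set.Ico 0 Cstar))
    (ε : ℝ) (hε0 : 0 < ε) (hεC : ε < Cstar)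
    (C : ℝ) (hC : C = Cstar - ε)
    (sL pL yL : Fin N → ℝ) (UL : Matrix (Fin N) (Fin N) ℝ)
    (hfeas : FeasPR3 w B α δ C sL pL yL UL)
    (hval : w sL + ∑ i, c i * pL i = fL C) :
    (w sL < C → fLstar = fL C ∧ fL C ≤ f0star) ∧
    (w sL = C → Cstar - f0star ≤ ε + ε * (fL 0 - fLstar) / Cstar) := by
  have hw : ∀ s, 0 ≤ s → 0 ≤ w s := fun s hs =>
    hw0 ▸ (show StrictMono w from fun s s' h => hwmono s s' h.le h.ne).monotone hs
  have hc' : ∀ i, 0 ≤ c i := fun i => (hc i).le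
  have hfL_le : ∀ C', ∀ v ∈ relaxedValues w B α δ c C', fL C' ≤ v :=
    fun C' v hv => (hfL C').trans_le (sInf_relaxedValues_le hw hc' hv)
  have hf0 : {v | ∃ s : Fin N → ℝ, 0 ≤ s ∧ v = w s + ∑ i, c i * pse s i}.Nonempty :=
    ⟨_, 0, le_rfl, rfl⟩
  constructor
  · intro hslack
    have hglob : ∀ C', ∀ v ∈ relaxedValues w B α δ c C', fL C ≤ v := fun C' v hv =>
      hval ▸ objective_le_of_budget_lt hwconv hBnn hfeas hslack (hval ▸ hfL_le C) hv
    refine ⟨hfLstar ▸ IsLeast.csInf_eq ⟨Set.mem_image_of_mem fL ⟨by linarith, by linarith⟩, ?_⟩,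
      hf0star ▸ le_csInf hf0 fun _ ⟨s, hs, e⟩ => e ▸ le_objective_pse hBnn hBirr
        (fun i => (hα i).le) hδ hc' hpse_range hpse_zero hpse_pos hglob hs⟩
    rintro _ ⟨C', hC', rfl⟩
    exact (hfL C').symm ▸ le_csInf
      (relaxedValues_nonempty (fun i => (hδ i).le) (hw0.trans_le hC'.1)) (hglob C')
  · intro hbind
    have hCV : ∀ v ∈ relaxedValues w B α δ c C, C ≤ v := fun v hv => by
      linarith [hfL_le C v hv, hfeas.sum_mul_nonneg hc']
    have hCρ : ∀ s : Fin N → ℝ, 0 ≤ s → rhoS B α δ s ≤ 1 → C ≤ w s := fun s hs hρ => by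
      have : Cstar ≤ w s := hCstar ▸ csInf_le ⟨0, by rintro _ ⟨s, hs, -, rfl⟩; exact hw s hs⟩
        ⟨s, hs, hρ, rfl⟩
      linarith
    have hCf0 : C ≤ f0star := hf0star ▸ le_csInf hf0 fun _ ⟨s, hs, e⟩ =>
      e ▸ le_objective_pse_of_le_budget hc' hpse_range hpse_pos hCρ hCV hs
    have hfL_bdd : BddBelow (fL '' Set.Ico 0 Cstar) := ⟨0, by
      rintro _ ⟨C', -, rfl⟩; exact (hfL C').trans_ge (sInf_relaxedValues_nonneg hw hc')⟩
    have hfL0 : fLstar ≤ fL 0 := hfLstar ▸ csInf_le hfL_bdd ⟨0, ⟨le_rfl, hCstar_pos⟩, rfl⟩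
    have : 0 ≤ ε * (fL 0 - fLstar) / Cstar :=
      div_nonneg (mul_nonneg hε0.le (sub_nonneg.mpr hfL0)) hCstar_pos.le
    linarith

theorem statement16 {N : ℕ} (hN : 2 ≤ N)
    (B : Matrix (Fin N) (Fin N) ℝ) (hBnn : ∀ i j, 0 ≤ B i j) (hBirr : MatIrred B)
    (δ α : Fin N → ℝ) (hδ : ∀ i, 0 < δ i) (hα : ∀ i, 0 < α i)
    (w : (Fin N → ℝ) → ℝ) (hwcont : Continuous w)
    (hwconv : ConvexOn ℝ Set.univ w)
    (hwmono : ∀ s s' : Fin N → ℝ, s ≤ s' → s ≠ s' → w s < w s')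
    (c : Fin N → ℝ) (hc : ∀ i, 0 < c i)
    (pse : (Fin N → ℝ) → (Fin N → ℝ))
    (hpse_range : ∀ s : Fin N → ℝ, 0 ≤ s → ∀ i, 0 ≤ pse s i ∧ pse s i ≤ 1)
    (hpse_zero : ∀ s : Fin N → ℝ, 0 ≤ s → rhoS B α δ s ≤ 1 → pse s = 0)
    (hpse_pos : ∀ s : Fin N → ℝ, 0 ≤ s → 1 < rhoS B α δ s →
      (∀ i, 0 < pse s i) ∧
      (∀ i, (1 - pse s i) * B.mulVec (pse s) i = (α i * s i + δ i) * pse s i))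
    (hρδ : 1 < specRad (Matrix.diagonal (fun i => (δ i)⁻¹) * B))
    (hw0 : w 0 = 0)
    (f0star : ℝ)
    (hf0star : f0star = sInf {v | ∃ s : Fin N → ℝ, 0 ≤ s ∧ v = w s + ∑ i, c i * pse s i})
    (Cstar : ℝ)
    (hCstar : Cstar = sInf {v | ∃ s : Fin N → ℝ, 0 ≤ s ∧ rhoS B α δ s ≤ 1 ∧ v = w s})
    (hCstar_pos : 0 < Cstar)
    (hCstar_fin : {v | ∃ s : Fin N → ℝ, 0 ≤ s ∧ rhoS B α δ s ≤ 1 ∧ v = w s}.Nonempty)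
    (fL : ℝ → ℝ)
    (hfL : ∀ C : ℝ, fL C = sInf {v | ∃ (s p y : Fin N → ℝ) (U : Matrix (Fin N) (Fin N) ℝ),
      FeasPR3 w B α δ C s p y U ∧ v = w s + ∑ i, c i * p i})
    (fLstar : ℝ) (hfLstar : fLstar = sInf (fL '' Set.Ico 0 Cstar))
    (ε : ℝ) (hε0 : 0 < ε) (hεC : ε < Cstar)
    (C : ℝ) (hC : C = Cstar - ε)
    (sL pL yL : Fin N → ℝ) (UL : Matrix (Fin N) (Fin N) ℝ)
    (hfeas : FeasPR3 w B α δ C sL pL yL UL)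
    (hval : w sL + ∑ i, c i * pL i = fL C) :
    (w sL < C → fLstar = fL C ∧ fL C ≤ f0star) ∧
    (w sL = C → Cstar - f0star ≤ ε + ε * (fL 0 - fLstar) / Cstar) :=
  statement16_general B hBnn hBirr δ α hδ hα w hwconv hwmono c hc pse hpse_range hpse_zero hpse_pos
    hw0 f0star hf0star Cstar hCstar hCstar_pos fL hfL fLstar hfLstar ε hε0 hεC C hC sL pL yL UL
    hfeas hval
end
end
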